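/- arXiv:1804.04809 — 7 statements merged into one kernel-verified Lean document; each statement's English description precedes it below -/
import Mathlib

section
/- Let n ≥ 1 and let G be a subgroup of U(n,1) every element of which is unipotent. Then there exists a vector v ∈ ℂ^{n+1} with v ≠ 0, conj(v)ᵀ·H·v = 0 (v is a null vector for the Hermitian form) and A·v = v for every A ∈ G. -/
/-!
The maps `g - 1` (`g ∈ G`) are nilpotent and `(g - 1)(g' - 1) = (gg' - 1) - (g - 1) - (g' - 1)`,
so their span `A` is closed under multiplication and consists of maps of trace zero. Hence every
power of an element of `A` has trace zero, which in characteristic zero makes it nilpotent, and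
Engel's theorem gives Kolchin's theorem: `A` kills a nonzero vector of `V ⧸ W` for every
`G`-invariant subspace `W ≠ V`.

Take for `W` the space of vectors fixed by `G`. If `W = V`, the null vector `e₀` is fixed.
Otherwise there is `v ∉ W` with `g v - v ∈ W` for all `g`, and `w = g v - v ≠ 0` for some `g`.
As `g` preserves `h` and fixes `w`, `h(w, g v) = h(w, v)`, that is, `h(w, w) = 0`.
-/

open Matrix

noncomputable section

/-- The ambient space ℂ^{n+1}. -/
abbrev HV (n : ℕ) : Type := Fin (n + 1) → ℂ

/-- The matrix of the Hermitian form of signature (n,1). -/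
def HMat (n : ℕ) : Matrix (Fin (n + 1)) (Fin (n + 1)) ℂ := fun i j =>
  if i = 0 ∧ j = Fin.last n then 1
  else if i = Fin.last n ∧ j = 0 then 1
  else if i = j ∧ i ≠ 0 ∧ i ≠ Fin.last n then 1
  else 0

/-- The group U(n,1) of matrices preserving the Hermitian form. -/
def USet (n : ℕ) : Set (Matrix (Fin (n + 1)) (Fin (n + 1)) ℂ) :=
  {A | Aᴴ * HMat n * A = HMat n}

open Module

theorem Finset.eq_zero_of_forall_sum_pow_mul_eq_zero {K : Type*} [CommRing K] [IsDomain K]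
    {s : Finset K} {c : K → K} (h : ∀ k ≠ 0, ∑ μ ∈ s, μ ^ k * c μ = 0) {μ₀ : K} (hμ₀ : μ₀ ∈ s)
    (hne : μ₀ ≠ 0) : c μ₀ = 0 := by
  classical
  have hsum (p : Polynomial K) (hp : p.coeff 0 = 0) : ∑ μ ∈ s, p.eval μ * c μ = 0 := by
    simp only [Polynomial.eval_eq_sum_range, Finset.sum_mul]
    rw [Finset.sum_comm]
    refine Finset.sum_eq_zero fun k _ => ?_
    rcases eq_or_ne k 0 with rfl | hk
    · simp [hp]
    · rw [← mul_zero (p.coeff k), ← h k hk, Finset.mul_sum]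
      exact Finset.sum_congr rfl fun μ _ => by ring
  -- `p` vanishes at `0` and on `s` except at `μ₀`.
  set p : Polynomial K := .X * ∏ ν ∈ s.erase μ₀, (.X - .C ν)
  have hpμ₀ : p.eval μ₀ ≠ 0 := by
    simp only [p, Polynomial.eval_mul, Polynomial.eval_X, Polynomial.eval_prod,
      Polynomial.eval_sub, Polynomial.eval_C]
    exact mul_ne_zero hne <| Finset.prod_ne_zero_iff.mpr fun ν hν =>
      sub_ne_zero.mpr (Finset.ne_of_mem_erase hν).symm
  have := hsum p (by simp [p])
  rw [Finset.sum_eq_single μ₀ (fun ν hν hνμ₀ => ?_) (absurd hμ₀)] at this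
  · exact (mul_eq_zero.mp this).resolve_left hpμ₀
  · simp [p, Polynomial.eval_prod, Finset.prod_eq_zero (Finset.mem_erase.mpr ⟨hνμ₀, hν⟩)]

theorem LinearMap.trace_pow_eq_pow_mul_finrank {R M : Type*} [CommRing R] [IsReduced R]
    [AddCommGroup M] [Module R M] [Module.Free R M] [Module.Finite R M] {f : Module.End R M}
    {μ : R} (hf : IsNilpotent (f - algebraMap R _ μ)) (k : ℕ) :
    trace R M (f ^ k) = μ ^ k * finrank R M := by
  induction k with
  | zero => simp
  | succ k ih =>
    rw [pow_succ, Module.End.mul_eq_comp,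
      trace_comp_eq_mul_of_commute_of_isNilpotent μ ((Commute.refl f).pow_left k) hf, ih]
    ring

theorem Module.End.isNilpotent_of_forall_trace_pow_eq_zero {K V : Type*} [Field K] [CharZero K]
    [IsAlgClosed K] [AddCommGroup V] [Module K V] [FiniteDimensional K V] (f : Module.End K V)
    (h : ∀ k ≠ 0, LinearMap.trace K V (f ^ k) = 0) : IsNilpotent f := by
  classical
  set E := f.maxGenEigenspace
  have hfin : {μ | E μ ≠ ⊥}.Finite :=
    WellFoundedGT.finite_ne_bot_of_iSupIndep f.independent_maxGenEigenspace
  have hE : DirectSum.IsInternal E := DirectSum.isInternal_submodule_of_iSupIndep_of_iSup_eq_top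
    f.independent_maxGenEigenspace f.iSup_maxGenEigenspace_eq_top
  have htrace (k : ℕ) :
      LinearMap.trace K V (f ^ k) = ∑ μ ∈ hfin.toFinset, μ ^ k * finrank K (E μ) := by
    rw [LinearMap.trace_eq_sum_trace_restrict' hE hfin
      (fun μ => f.mapsTo_maxGenEigenspace_of_comm ((Commute.refl f).pow_right k) μ)]
    refine Finset.sum_congr rfl fun μ _ => ?_
    rw [← Module.End.pow_restrict k (f.mapsTo_maxGenEigenspace_of_comm rfl μ),
      LinearMap.trace_pow_eq_pow_mul_finrank
        (f.isNilpotent_restrict_maxGenEigenspace_sub_algebraMap μ)]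
  have hzero (μ : K) (hμ : μ ≠ 0) : E μ = ⊥ := by
    by_contra hne
    have := Finset.eq_zero_of_forall_sum_pow_mul_eq_zero
      (fun k hk => (htrace k).symm.trans (h k hk)) (hfin.mem_toFinset.mpr hne) hμ
    exact hne (Submodule.finrank_eq_zero.mp (by exact_mod_cast this))
  have htop : E 0 = ⊤ := by
    rw [eq_top_iff, ← f.iSup_maxGenEigenspace_eq_top]
    refine iSup_le fun μ => show E μ ≤ E 0 from ?_
    rcases eq_or_ne μ 0 with rfl | hμ
    · exact le_rfl
    · rw [hzero μ hμ]
      exact bot_le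
  refine ((LinearMap.charpoly_nilpotent_tfae f).out 0 2).mpr fun x => ?_
  simpa [E, Module.End.mem_maxGenEigenspace] using htop.ge (Submodule.mem_top (x := x))

attribute [local instance 100] LieRing.ofAssociativeRing

theorem LieSubalgebra.exists_notMem_forall_apply_mem {R M : Type*} [CommRing R] [AddCommGroup M]
    [Module R M] [IsNoetherian R M] (L : LieSubalgebra R (Module.End R M))
    (hL : ∀ x ∈ L, IsNilpotent x) (W : Submodule R M) (hW : W ≠ ⊤)
    (hLW : ∀ x ∈ L, ∀ w ∈ W, x w ∈ W) : ∃ v ∉ W, ∀ x ∈ L, x v ∈ W := by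
  let N : LieSubmodule R L M := { W with lie_mem := fun {x w} hw => hLW x x.2 w hw }
  have : LieModule.IsNilpotent L M := LieModule.isNilpotent_iff_forall'.mpr fun x => hL x x.2
  have : LieModule.IsNilpotent L (M ⧸ N) :=
    Function.Surjective.lieModuleIsNilpotent (f := LieHom.id) (g := N.mkQ)
      (fun _ _ => rfl) Function.surjective_id (LieSubmodule.Quotient.surjective_mk' N)
  have : Nontrivial (M ⧸ N) := Submodule.Quotient.nontrivial_iff.mpr hW
  have := LieModule.nontrivial_max_triv_of_isNilpotent R L (M ⧸ N)
  obtain ⟨⟨q, hq⟩, hq0⟩ := exists_ne (0 : LieModule.maxTrivSubmodule R L (M ⧸ N))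
  obtain ⟨v, rfl⟩ := LieSubmodule.Quotient.surjective_mk' N q
  refine ⟨v, fun hv => hq0 (Subtype.ext (LieSubmodule.Quotient.mk_eq_zero'.mpr hv)), ?_⟩
  exact fun x hx => LieSubmodule.Quotient.mk_eq_zero'.mp
    ((LieModule.mem_maxTrivSubmodule R L _ _).mp hq ⟨x, hx⟩)

theorem Submodule.pow_mem_of_mul_le_self {R A : Type*} [CommSemiring R] [Semiring A]
    [Algebra R A] {M : Submodule R A} (hM : M * M ≤ M) {x : A} (hx : x ∈ M) {k : ℕ}
    (hk : k ≠ 0) : x ^ k ∈ M := by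
  induction k with
  | zero => exact absurd rfl hk
  | succ k ih =>
    rcases eq_or_ne k 0 with rfl | hk
    · simpa using hx
    · rw [pow_succ]
      exact hM (Submodule.mul_mem_mul (ih hk) hx)

theorem MonoidHom.span_range_sub_one_mul_le {R A G : Type*} [CommRing R] [Ring A] [Algebra R A]
    [Monoid G] (ρ : G →* A) :
    Submodule.span R (Set.range (ρ · - 1)) * Submodule.span R (Set.range (ρ · - 1)) ≤
      Submodule.span R (Set.range (ρ · - 1)) := by
  rw [Submodule.span_mul_span, Submodule.span_le]
  rintro _ ⟨_, ⟨g, rfl⟩, _, ⟨h, rfl⟩, rfl⟩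
  have hgh : (ρ g - 1) * (ρ h - 1) = (ρ (g * h) - 1) - (ρ g - 1) - (ρ h - 1) := by
    rw [map_mul]
    noncomm_ring
  change (ρ g - 1) * (ρ h - 1) ∈ Submodule.span R _
  rw [hgh]
  exact sub_mem (sub_mem (Submodule.subset_span ⟨_, rfl⟩) (Submodule.subset_span ⟨_, rfl⟩))
    (Submodule.subset_span ⟨_, rfl⟩)

theorem Representation.exists_notMem_forall_sub_mem {K V G : Type*} [Field K] [CharZero K]
    [IsAlgClosed K] [AddCommGroup V] [Module K V] [FiniteDimensional K V] [Monoid G]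
    (ρ : Representation K G V) (hρ : ∀ g, IsNilpotent (ρ g - 1)) (W : Submodule K V)
    (hW : W ≠ ⊤) (hρW : ∀ g, ∀ w ∈ W, ρ g w ∈ W) : ∃ v ∉ W, ∀ g, ρ g v - v ∈ W := by
  set A := Submodule.span K (Set.range (ρ · - 1))
  have hA : A * A ≤ A := ρ.span_range_sub_one_mul_le
  have htrace : A ≤ LinearMap.ker (LinearMap.trace K V) := by
    rw [Submodule.span_le]
    rintro _ ⟨g, rfl⟩
    exact (LinearMap.isNilpotent_trace_of_isNilpotent (hρ g)).eq_zero
  have hnil (x : Module.End K V) (hx : x ∈ A) : IsNilpotent x :=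
    x.isNilpotent_of_forall_trace_pow_eq_zero fun k hk =>
      htrace (Submodule.pow_mem_of_mul_le_self hA hx hk)
  have hAW : A ≤ Submodule.compatibleMaps W W := by
    rw [Submodule.span_le]
    rintro _ ⟨g, rfl⟩ w hw
    exact sub_mem (hρW g w hw) hw
  let L : LieSubalgebra K (Module.End K V) :=
    { A with
      lie_mem' := fun {x y} hx hy => sub_mem (hA (Submodule.mul_mem_mul hx hy))
        (hA (Submodule.mul_mem_mul hy hx)) }
  obtain ⟨v, hv, hLv⟩ := L.exists_notMem_forall_apply_mem hnil W hW fun x hx => hAW hx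
  exact ⟨v, hv, fun g => hLv _ (Submodule.subset_span ⟨g, rfl⟩)⟩

theorem Matrix.star_mulVec_dotProduct_mulVec_mulVec {ι R : Type*} [Fintype ι] [CommRing R]
    [StarRing R] (A H : Matrix ι ι R) (u v : ι → R) :
    star (A *ᵥ u) ⬝ᵥ H *ᵥ (A *ᵥ v) = star u ⬝ᵥ (Aᴴ * H * A) *ᵥ v := by
  rw [Matrix.star_mulVec, ← Matrix.dotProduct_mulVec, Matrix.mulVec_mulVec,
    Matrix.mulVec_mulVec, Matrix.mul_assoc]

theorem Matrix.star_dotProduct_mulVec_eq_zero_of_mulVec_sub_fixed {ι R : Type*} [Fintype ι]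
    [CommRing R] [StarRing R] {A H : Matrix ι ι R} (hA : Aᴴ * H * A = H) {v : ι → R}
    (hfix : A *ᵥ (A *ᵥ v - v) = A *ᵥ v - v) :
    star (A *ᵥ v - v) ⬝ᵥ H *ᵥ (A *ᵥ v - v) = 0 := by
  have hw : star (A *ᵥ v - v) ⬝ᵥ H *ᵥ (A *ᵥ v) = star (A *ᵥ v - v) ⬝ᵥ H *ᵥ v := by
    conv_lhs => rw [← hfix]
    rw [star_mulVec_dotProduct_mulVec_mulVec, hA]
  rw [Matrix.mulVec_sub, dotProduct_sub, hw, sub_self]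

theorem star_single_zero_dotProduct_HMat_mulVec_single_zero {n : ℕ} (hn : 1 ≤ n) :
    star (Pi.single 0 1 : HV n) ⬝ᵥ HMat n *ᵥ Pi.single 0 1 = 0 := by
  have h0 : (0 : Fin (n + 1)) ≠ Fin.last n := Fin.ext_iff.not.mpr (by simp; omega)
  simp [HMat, Matrix.mulVec_single, h0]

/-- a unipotent subgroup of U(n,1) fixes a nonzero null vector
for the Hermitian form. -/
theorem unipotent_subgroup_fixes_null_vector (n : ℕ) (hn : 1 ≤ n)
    (G : Subgroup (Matrix (Fin (n + 1)) (Fin (n + 1)) ℂ)ˣ)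
    (hU : ∀ A ∈ G, ((A : (Matrix (Fin (n + 1)) (Fin (n + 1)) ℂ)ˣ) :
      Matrix (Fin (n + 1)) (Fin (n + 1)) ℂ) ∈ USet n)
    (hunip : ∀ A ∈ G, IsNilpotent (((A : (Matrix (Fin (n + 1)) (Fin (n + 1)) ℂ)ˣ) :
      Matrix (Fin (n + 1)) (Fin (n + 1)) ℂ) - 1)) :
    ∃ v : HV n, v ≠ 0 ∧
      dotProduct (star v) ((HMat n).mulVec v) = 0 ∧
      ∀ A ∈ G, ((A : (Matrix (Fin (n + 1)) (Fin (n + 1)) ℂ)ˣ) :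
        Matrix (Fin (n + 1)) (Fin (n + 1)) ℂ).mulVec v = v := by
  let ρ : Representation ℂ G (HV n) :=
    Matrix.toLinAlgEquiv'.toMonoidHom.comp ((Units.coeHom _).comp G.subtype)
  have hmem_invariants (v : HV n) : v ∈ ρ.invariants ↔ ∀ A ∈ G, (A : Matrix _ _ ℂ) *ᵥ v = v :=
    ⟨fun hv A hA => hv ⟨A, hA⟩, fun hv A => hv A A.2⟩
  by_cases hW : ρ.invariants = ⊤
  · refine ⟨Pi.single 0 1, by simp, star_single_zero_dotProduct_HMat_mulVec_single_zero hn, ?_⟩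
    exact (hmem_invariants _).mp (hW ▸ Submodule.mem_top)
  have hunip' (A : G) : IsNilpotent (ρ A - 1) := by
    have := (hunip A A.2).map Matrix.toLinAlgEquiv'
    rwa [map_sub, map_one] at this
  obtain ⟨v, hv, hvW⟩ := ρ.exists_notMem_forall_sub_mem hunip' ρ.invariants hW
    fun A w hw => (hw A).symm ▸ hw
  obtain ⟨A, hA⟩ := not_forall.mp hv
  refine ⟨ρ A v - v, sub_ne_zero.mpr hA, ?_, (hmem_invariants _).mp (hvW A)⟩
  exact Matrix.star_dotProduct_mulVec_eq_zero_of_mulVec_sub_fixed (hU A A.2) (hvW A A)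
end
end

section
/- Let n ≥ 1. (i) The set 𝒰 of block matrices [[1, −conj(w)ᵀ, −(1/2)·conj(w)ᵀw + i·t],[0, I_{n−1}, w],[0,0,1]] (blocks of sizes 1, n−1, 1) with w ∈ ℂ^{n−1} and t ∈ ℝ is a subgroup of U(n,1), all of whose elements are unipotent. (ii) Conversely, if A ∈ U(n,1) is unipotent and has block upper-triangular form [[1, vᵀ, a],[0, M, w],[0,0,1]] (blocks of sizes 1, n−1, 1), then A ∈ 𝒰; that is, M = I_{n−1}, v = −conj(w), and a = −(1/2)·conj(w)ᵀw + i·t for some t ∈ ℝ. -/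
open Matrix

noncomputable section

/-- The block matrix [[1, −w*, −(1/2)w*w + i t],[0, I, w],[0,0,1]], where the
vector w ∈ ℂ^{n-1} is encoded as a vector on Fin (n+1) supported on the middle
indices. -/
def UMat (n : ℕ) (w : Fin (n + 1) → ℂ) (t : ℝ) :
    Matrix (Fin (n + 1)) (Fin (n + 1)) ℂ := fun i j =>
  if i = 0 then
    (if j = 0 then 1
     else if j = Fin.last n then
       -(1 / 2 : ℂ) * dotProduct (star w) w + (t : ℂ) * Complex.I
     else -((starRingEnd ℂ) (w j)))
  else if i = Fin.last n then (if j = Fin.last n then 1 else 0)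
  else (if j = Fin.last n then w i else if j = i then 1 else 0)

/-- The set 𝒰 of all such matrices. -/
def MaxUnip (n : ℕ) : Set (Matrix (Fin (n + 1)) (Fin (n + 1)) ℂ) :=
  {M | ∃ (w : Fin (n + 1) → ℂ) (t : ℝ),
    w 0 = 0 ∧ w (Fin.last n) = 0 ∧ M = UMat n w t}

/-! Write `A = 1 + N` with `N = w e_qᵀ - e_p w* + c e_p e_qᵀ`, where `p = 0`, `q = last` and
`w` is supported off `{p, q}`. Any product of two such `N` is a multiple of `e_p e_qᵀ`; this
gives the Heisenberg group law `(w, c) (w', c') = (w + w', c + c' - w* w')` and `N ^ 3 = 0`.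
The form `H` is the permutation matrix of the transposition `(p q)`, and
`Aᴴ H A = H + (c + c̄ + w* w) e_q e_qᵀ`, so `A` is in `U(n,1)` exactly when
`Re c = -|w|² / 2`.

Conversely, let `A ∈ U(n,1)` be unipotent and block upper triangular, with middle block `M`.
The middle entries of `Aᴴ H A = H` say `Mᴴ M = 1`, and `tr (M - 1) = tr (A - 1) = 0`, so
`‖M - 1‖² = tr ((M - 1)ᴴ (M - 1)) = -2 Re tr (M - 1) = 0`. The last column of
`Aᴴ H A = H` then gives the first row and the corner. -/

theorem eq_or_eq_or_ne_and_ne {ι : Type*} (p q i : ι) :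
    i = p ∨ i = q ∨ (i ≠ p ∧ i ≠ q) := by
  tauto

theorem Finset.sum_eq_add_add_sum_compl_pair {ι M : Type*} [Fintype ι] [DecidableEq ι]
    [AddCommMonoid M] {p q : ι} (hpq : p ≠ q) (f : ι → M) :
    ∑ k, f k = f p + f q + ∑ k ∈ ({p, q} : Finset ι)ᶜ, f k := by
  rw [← Finset.sum_add_sum_compl {p, q}, Finset.sum_pair hpq]

theorem Matrix.eq_one_of_conjTranspose_mul_self_of_trace_sub_one {m R : Type*} [Fintype m]
    [DecidableEq m] [Ring R] [PartialOrder R] [StarRing R] [StarOrderedRing R] [NoZeroDivisors R]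
    {M : Matrix m m R} (hM : Mᴴ * M = 1) (htr : trace (M - 1) = 0) : M = 1 := by
  have key : (M - 1)ᴴ * (M - 1) = -((M - 1) + (M - 1)ᴴ) := by
    simp only [conjTranspose_sub, conjTranspose_one, Matrix.sub_mul, Matrix.mul_sub, hM,
      Matrix.mul_one, Matrix.one_mul]
    abel
  rw [← sub_eq_zero, ← trace_conjTranspose_mul_self_eq_zero_iff, key, trace_neg, trace_add,
    trace_conjTranspose, htr, star_zero, add_zero, neg_zero]

section Swap

variable {ι R : Type*} [DecidableEq ι] [Semiring R] {p q : ι}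

theorem Pi.single_comp_swap_left : Pi.single p (1 : R) ∘ Equiv.swap p q = Pi.single q 1 := by
  ext i
  simp [Pi.single_apply, Equiv.swap_apply_eq_iff]

theorem comp_swap_of_apply_eq_zero {w : ι → R} (hwp : w p = 0) (hwq : w q = 0) :
    w ∘ Equiv.swap p q = w := by
  ext i
  rcases eq_or_eq_or_ne_and_ne p q i with rfl | rfl | ⟨hip, hiq⟩
  · simp [hwp, hwq]
  · simp [hwp, hwq]
  · simp [Equiv.swap_apply_of_ne_of_ne hip hiq]

theorem Matrix.conjTranspose_mul_swap_mul_apply [Fintype ι] [StarRing R] (hpq : p ≠ q)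
    (A : Matrix ι ι R) (i j : ι) :
    (Aᴴ * swap R p q * A) i j = star (A p i) * A q j + star (A q i) * A p j +
      ∑ k ∈ ({p, q} : Finset ι)ᶜ, star (A k i) * A k j := by
  rw [Matrix.mul_assoc, mul_apply, Finset.sum_eq_add_add_sum_compl_pair hpq, swap_mul_apply_left,
    swap_mul_apply_right]
  congr 1
  refine Finset.sum_congr rfl fun k hk => ?_
  simp only [Finset.mem_compl, Finset.mem_insert, Finset.mem_singleton, not_or] at hk
  rw [swap_mul_of_ne hk.1 hk.2, conjTranspose_apply]

end Swap

section Heisenberg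

variable {ι R : Type*} [DecidableEq ι] [CommRing R] [StarRing R] {p q : ι}

def heisenbergNil (p q : ι) (w : ι → R) (c : R) : Matrix ι ι R :=
  vecMulVec w (Pi.single q 1) - vecMulVec (Pi.single p 1) (star w) +
    c • vecMulVec (Pi.single p 1) (Pi.single q 1)

theorem heisenbergNil_apply (p q : ι) (w : ι → R) (c : R) (i j : ι) :
    heisenbergNil p q w c i j = (if j = q then w i else 0) - (if i = p then star (w j) else 0) +
      (if i = p ∧ j = q then c else 0) := by
  simp only [heisenbergNil, Matrix.add_apply, Matrix.sub_apply, Matrix.smul_apply, vecMulVec_apply,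
    Pi.single_apply, smul_eq_mul]
  split_ifs <;> simp_all

theorem heisenbergNil_add_heisenbergNil (w w' : ι → R) (c c' : R) :
    heisenbergNil p q w c + heisenbergNil p q w' c' = heisenbergNil p q (w + w') (c + c') := by
  simp only [heisenbergNil, add_vecMulVec, star_add, vecMulVec_add, add_smul]
  abel

theorem smul_heisenbergNil_zero_one (c : R) :
    c • heisenbergNil p q 0 1 = heisenbergNil p q 0 c := by
  simp [heisenbergNil]

variable [Fintype ι]

theorem heisenbergNil_mul_heisenbergNil (hpq : p ≠ q) {w w' : ι → R} (hw : w p = 0)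
    (hw' : w' q = 0) (c c' : R) :
    heisenbergNil p q w c * heisenbergNil p q w' c' =
      -(star w ⬝ᵥ w') • heisenbergNil p q 0 1 := by
  simp [heisenbergNil, Matrix.mul_add, Matrix.add_mul, Matrix.mul_sub, Matrix.sub_mul,
    vecMulVec_mul_vecMulVec, single_dotProduct, dotProduct_single, hw, hw', hpq]

theorem one_add_heisenbergNil_mul (hpq : p ≠ q) {w w' : ι → R} (hw : w p = 0) (hw' : w' q = 0)
    (c c' : R) :
    (1 + heisenbergNil p q w c) * (1 + heisenbergNil p q w' c') =
      1 + heisenbergNil p q (w + w') (c + c' - star w ⬝ᵥ w') := by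
  rw [Matrix.add_mul, Matrix.one_mul, Matrix.mul_add, Matrix.mul_one,
    heisenbergNil_mul_heisenbergNil hpq hw hw', smul_heisenbergNil_zero_one, add_assoc,
    heisenbergNil_add_heisenbergNil, heisenbergNil_add_heisenbergNil]
  congr 2 <;> abel

theorem heisenbergNil_pow_three (hpq : p ≠ q) {w : ι → R} (hwp : w p = 0) (hwq : w q = 0)
    (c : R) : heisenbergNil p q w c ^ 3 = 0 := by
  rw [pow_succ, pow_two, heisenbergNil_mul_heisenbergNil hpq hwp hwq, Matrix.smul_mul,
    heisenbergNil_mul_heisenbergNil hpq rfl hwq, star_zero, zero_dotProduct, neg_zero, zero_smul,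
    smul_zero]

theorem swap_mul_heisenbergNil {w : ι → R} (hwp : w p = 0) (hwq : w q = 0) (c : R) :
    swap R p q * heisenbergNil p q w c =
      vecMulVec w (Pi.single q 1) - vecMulVec (Pi.single q 1) (star w) +
        c • vecMulVec (Pi.single q 1) (Pi.single q 1) := by
  simp only [heisenbergNil, Matrix.mul_add, Matrix.mul_sub, Matrix.mul_smul, mul_vecMulVec,
    swap_mulVec, Pi.single_comp_swap_left, comp_swap_of_apply_eq_zero hwp hwq]

theorem conjTranspose_mul_swap_mul_one_add_heisenbergNil (hpq : p ≠ q) {w : ι → R}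
    (hwp : w p = 0) (hwq : w q = 0) (c : R) :
    (1 + heisenbergNil p q w c)ᴴ * swap R p q * (1 + heisenbergNil p q w c) =
      swap R p q +
        (c + star c + star w ⬝ᵥ w) • vecMulVec (Pi.single q 1) (Pi.single q 1) := by
  set H := swap R p q
  set N := heisenbergNil p q w c
  have hHN := swap_mul_heisenbergNil hwp hwq c
  have hNH : Nᴴ * H = (H * N)ᴴ := by rw [conjTranspose_mul, conjTranspose_swap]
  have hNHN : Nᴴ * (H * N) = (star w ⬝ᵥ w) • vecMulVec (Pi.single q 1) (Pi.single q 1) := by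
    rw [hHN]
    simp [N, heisenbergNil, Matrix.mul_add, Matrix.add_mul, Matrix.mul_sub, Matrix.sub_mul,
      conjTranspose_vecMulVec, vecMulVec_mul_vecMulVec, single_dotProduct, dotProduct_single, hwp,
      hwq, hpq]
  calc (1 + N)ᴴ * H * (1 + N) = H + H * N + Nᴴ * H + Nᴴ * (H * N) := by
        rw [conjTranspose_add, conjTranspose_one]
        noncomm_ring
    _ = _ := by
        rw [hNH, hNHN, hHN]
        simp only [conjTranspose_add, conjTranspose_sub, conjTranspose_smul,
          conjTranspose_vecMulVec, star_star, Pi.star_single, star_one, add_smul]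
        abel

end Heisenberg

section HeisenbergSet

variable {ι R : Type*} [Fintype ι] [DecidableEq ι] [CommRing R] [StarRing R] {p q : ι}

def heisenbergSet (p q : ι) : Set (Matrix ι ι R) :=
  {A | ∃ w c, w p = 0 ∧ w q = 0 ∧ c + star c + star w ⬝ᵥ w = 0 ∧
    A = 1 + heisenbergNil p q w c}

theorem one_mem_heisenbergSet : (1 : Matrix ι ι R) ∈ heisenbergSet p q :=
  ⟨0, 0, rfl, rfl, by simp, by simp [heisenbergNil]⟩

theorem mul_mem_heisenbergSet (hpq : p ≠ q) {A B : Matrix ι ι R} (hA : A ∈ heisenbergSet p q)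
    (hB : B ∈ heisenbergSet p q) : A * B ∈ heisenbergSet p q := by
  obtain ⟨w, c, hwp, hwq, hc, rfl⟩ := hA
  obtain ⟨w', c', hwp', hwq', hc', rfl⟩ := hB
  refine ⟨w + w', c + c' - star w ⬝ᵥ w', by simp [hwp, hwp'], by simp [hwq, hwq'], ?_,
    one_add_heisenbergNil_mul hpq hwp hwq' c c'⟩
  have h : star (star w ⬝ᵥ w') = star w' ⬝ᵥ w := (star_dotProduct w' w).symm
  simp only [star_sub, star_add, h, add_dotProduct, dotProduct_add]
  linear_combination hc + hc'

theorem exists_mul_eq_one_of_mem_heisenbergSet (hpq : p ≠ q) {A : Matrix ι ι R}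
    (hA : A ∈ heisenbergSet p q) : ∃ B ∈ heisenbergSet p q, A * B = 1 ∧ B * A = 1 := by
  obtain ⟨w, c, hwp, hwq, hc, rfl⟩ := hA
  have hc' : star c + c + star w ⬝ᵥ w = 0 := by rw [add_comm (star c)]; exact hc
  refine ⟨1 + heisenbergNil p q (-w) (star c),
    ⟨-w, star c, by simp [hwp], by simp [hwq], by simpa using hc', rfl⟩, ?_, ?_⟩
  · rw [one_add_heisenbergNil_mul hpq hwp (by simp [hwq]), dotProduct_neg, sub_neg_eq_add, hc,
      add_neg_cancel]
    simp [heisenbergNil]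
  · rw [one_add_heisenbergNil_mul hpq (by simp [hwp]) hwq, star_neg, neg_dotProduct,
      sub_neg_eq_add, hc', neg_add_cancel]
    simp [heisenbergNil]

theorem conjTranspose_mul_swap_mul_of_mem_heisenbergSet (hpq : p ≠ q) {A : Matrix ι ι R}
    (hA : A ∈ heisenbergSet p q) : Aᴴ * swap R p q * A = swap R p q := by
  obtain ⟨w, c, hwp, hwq, hc, rfl⟩ := hA
  rw [conjTranspose_mul_swap_mul_one_add_heisenbergNil hpq hwp hwq, hc, zero_smul, add_zero]

theorem isNilpotent_sub_one_of_mem_heisenbergSet (hpq : p ≠ q) {A : Matrix ι ι R}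
    (hA : A ∈ heisenbergSet p q) : IsNilpotent (A - 1) := by
  obtain ⟨w, c, hwp, hwq, -, rfl⟩ := hA
  exact ⟨3, by rw [add_sub_cancel_left, heisenbergNil_pow_three hpq hwp hwq]⟩

end HeisenbergSet

section Converse

open scoped ComplexOrder

variable {ι 𝕜 : Type*} [Fintype ι] [DecidableEq ι] [RCLike 𝕜] {p q : ι}
  {A : Matrix ι ι 𝕜}

theorem submatrix_compl_pair_eq_one (hpq : p ≠ q) (hA : Aᴴ * swap 𝕜 p q * A = swap 𝕜 p q)
    (hnil : IsNilpotent (A - 1)) (hpp : A p p = 1) (hqq : A q q = 1)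
    (hrow : ∀ j ≠ q, A q j = 0) :
    A.submatrix (↑) (↑) =
      (1 : Matrix ({p, q}ᶜ : Finset ι) ({p, q}ᶜ : Finset ι) 𝕜) := by
  have mem {k : ι} (hk : k ∈ ({p, q} : Finset ι)ᶜ) : k ≠ p ∧ k ≠ q := by
    simpa [not_or] using hk
  apply eq_one_of_conjTranspose_mul_self_of_trace_sub_one
  · ext ⟨i, hi⟩ ⟨j, hj⟩
    have h := congrFun₂ hA i j
    rw [conjTranspose_mul_swap_mul_apply hpq, ← Matrix.mul_one (swap 𝕜 p q),
      swap_mul_of_ne (mem hi).1 (mem hi).2, hrow i (mem hi).2, hrow j (mem hj).2, mul_zero,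
      star_zero, zero_mul, zero_add, ← Finset.sum_coe_sort] at h
    simpa [mul_apply, one_apply] using h
  · have htr := (isNilpotent_trace_of_isNilpotent hnil).eq_zero
    rw [trace, Finset.sum_eq_add_add_sum_compl_pair hpq] at htr
    simpa [trace, hpp, hqq, one_apply, Finset.sum_attach _ (fun k => A k k - 1)] using htr

theorem sum_compl_pair_star_mul_of_middle_eq_one
    (hmid : ∀ i ∈ ({p, q}ᶜ : Finset ι), ∀ j ∈ ({p, q}ᶜ : Finset ι),
      A i j = (1 : Matrix ι ι 𝕜) i j)
    {i : ι} (hi : i ∈ ({p, q}ᶜ : Finset ι)) (j : ι) :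
    ∑ k ∈ ({p, q}ᶜ : Finset ι), star (A k i) * A k j = A i j := by
  rw [Finset.sum_eq_single_of_mem i hi]
  · rw [hmid i hi i hi, one_apply_eq, star_one, one_mul]
  · intro k hk hki
    rw [hmid k hk i hi, one_apply_ne hki, star_zero, zero_mul]

theorem apply_left_eq_neg_star_of_middle_eq_one (hpq : p ≠ q)
    (hA : Aᴴ * swap 𝕜 p q * A = swap 𝕜 p q) (hqq : A q q = 1)
    (hrow : ∀ j ≠ q, A q j = 0)
    (hmid : ∀ i ∈ ({p, q}ᶜ : Finset ι), ∀ j ∈ ({p, q}ᶜ : Finset ι),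
      A i j = (1 : Matrix ι ι 𝕜) i j)
    {j : ι} (hjp : j ≠ p) (hjq : j ≠ q) : A p j = -star (A j q) := by
  have hj : j ∈ ({p, q}ᶜ : Finset ι) := by simp [hjp, hjq]
  have h := congrFun₂ hA j q
  rw [conjTranspose_mul_swap_mul_apply hpq, hqq, hrow j hjq,
    sum_compl_pair_star_mul_of_middle_eq_one hmid hj, ← Matrix.mul_one (swap 𝕜 p q),
    swap_mul_of_ne hjp hjq, one_apply_ne hjq, mul_one, star_zero, zero_mul, add_zero] at h
  rw [← star_star (A p j), eq_neg_of_add_eq_zero_left h, star_neg]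

theorem corner_add_star_add_sum_eq_zero (hpq : p ≠ q)
    (hA : Aᴴ * swap 𝕜 p q * A = swap 𝕜 p q) (hqq : A q q = 1) :
    A p q + star (A p q) + ∑ k ∈ ({p, q}ᶜ : Finset ι), star (A k q) * A k q = 0 := by
  have h := congrFun₂ hA q q
  rw [conjTranspose_mul_swap_mul_apply hpq, hqq, ← Matrix.mul_one (swap 𝕜 p q),
    swap_mul_apply_right, one_apply_ne hpq, star_one, one_mul, mul_one] at h
  rw [← h]
  ring

theorem mem_heisenbergSet_of_isNilpotent_sub_one (hpq : p ≠ q)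
    (hA : Aᴴ * swap 𝕜 p q * A = swap 𝕜 p q) (hnil : IsNilpotent (A - 1))
    (hpp : A p p = 1) (hqq : A q q = 1) (hcol : ∀ i ≠ p, A i p = 0)
    (hrow : ∀ j ≠ q, A q j = 0) : A ∈ heisenbergSet p q := by
  set S : Finset ι := {p, q}ᶜ
  have hS {k : ι} (hkp : k ≠ p) (hkq : k ≠ q) : k ∈ S := by simp [S, hkp, hkq]
  have hmid : ∀ i ∈ S, ∀ j ∈ S, A i j = (1 : Matrix ι ι 𝕜) i j := fun i hi j hj => by
    simpa [one_apply] using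
      congrFun₂ (submatrix_compl_pair_eq_one hpq hA hnil hpp hqq hrow) ⟨i, hi⟩ ⟨j, hj⟩
  set w : ι → 𝕜 := fun k => if k ∈ S then A k q else 0
  have hwp : w p = 0 := by simp [w, S]
  have hwq : w q = 0 := by simp [w, S]
  have hcorner : A p q + star (A p q) + star w ⬝ᵥ w = 0 := by
    rw [dotProduct, Finset.sum_eq_add_add_sum_compl_pair hpq]
    simp only [Pi.star_apply, hwp, hwq, mul_zero, zero_add]
    rw [← corner_add_star_add_sum_eq_zero hpq hA hqq]
    congr 1
    exact Finset.sum_congr rfl fun k (hk : k ∈ S) => by simp [w, hk]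
  refine ⟨w, A p q, hwp, hwq, hcorner, ?_⟩
  ext i j
  rcases eq_or_eq_or_ne_and_ne p q i with rfl | rfl | ⟨hip, hiq⟩
  · rcases eq_or_eq_or_ne_and_ne i q j with rfl | rfl | ⟨hjp, hjq⟩
    · simp [heisenbergNil_apply, hpq, hwp, hpp]
    · simp [heisenbergNil_apply, hpq, hwp, hwq]
    · simp [heisenbergNil_apply, hjq, Ne.symm hjp, w, hS hjp hjq,
        apply_left_eq_neg_star_of_middle_eq_one hpq hA hqq hrow hmid hjp hjq]
  · rcases eq_or_ne j i with rfl | hjq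
    · simp [heisenbergNil_apply, hpq.symm, hwq, hqq]
    · simp [heisenbergNil_apply, hpq.symm, hjq, hrow j hjq, Ne.symm hjq]
  · rcases eq_or_eq_or_ne_and_ne p q j with rfl | rfl | ⟨hjp, hjq⟩
    · simp [heisenbergNil_apply, hpq, hip, hcol i hip]
    · simp [heisenbergNil_apply, hip, hiq, w, hS hip hiq]
    · simp [heisenbergNil_apply, hip, hjq, hmid i (hS hip hiq) j (hS hjp hjq)]

end Converse

theorem HMat_eq_swap (n : ℕ) : HMat n = swap ℂ 0 (Fin.last n) := by
  ext i j
  rcases eq_or_eq_or_ne_and_ne 0 (Fin.last n) i with rfl | rfl | ⟨hi0, hil⟩ <;>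
  rcases eq_or_eq_or_ne_and_ne 0 (Fin.last n) j with rfl | rfl | ⟨hj0, hjl⟩ <;>
  simp [HMat, swap, PEquiv.toMatrix_apply, Equiv.swap_apply_of_ne_of_ne, *] <;> grind

theorem mem_USet_iff {n : ℕ} {A : Matrix (Fin (n + 1)) (Fin (n + 1)) ℂ} :
    A ∈ USet n ↔ Aᴴ * swap ℂ 0 (Fin.last n) * A = swap ℂ 0 (Fin.last n) := by
  rw [USet, Set.mem_ofPred_eq, HMat_eq_swap]

theorem UMat_eq_one_add_heisenbergNil {n : ℕ} (h0 : (0 : Fin (n + 1)) ≠ Fin.last n)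
    {w : Fin (n + 1) → ℂ} (hw0 : w 0 = 0) (hwl : w (Fin.last n) = 0) (t : ℝ) :
    UMat n w t =
      1 + heisenbergNil 0 (Fin.last n) w (-(1 / 2) * (star w ⬝ᵥ w) + t * Complex.I) := by
  ext i j
  rcases eq_or_eq_or_ne_and_ne 0 (Fin.last n) i with rfl | rfl | ⟨hi0, hil⟩ <;>
  rcases eq_or_eq_or_ne_and_ne 0 (Fin.last n) j with rfl | rfl | ⟨hj0, hjl⟩ <;>
  simp [UMat, heisenbergNil_apply, one_apply, h0.symm, *] <;> grind

theorem MaxUnip_eq_heisenbergSet {n : ℕ} (h0 : (0 : Fin (n + 1)) ≠ Fin.last n) :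
    MaxUnip n = heisenbergSet 0 (Fin.last n) := by
  ext A
  constructor
  · rintro ⟨w, t, hw0, hwl, rfl⟩
    refine ⟨w, _, hw0, hwl, ?_, UMat_eq_one_add_heisenbergNil h0 hw0 hwl t⟩
    have hreal : star (star w ⬝ᵥ w) = star w ⬝ᵥ w := (star_dotProduct w w).symm
    simp only [star_add, star_mul', star_neg, hreal, Complex.star_def, map_div₀, map_one,
      map_ofNat, Complex.conj_ofReal, Complex.conj_I]
    ring
  · rintro ⟨w, c, hw0, hwl, hc, rfl⟩
    refine ⟨w, c.im, hw0, hwl, ?_⟩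
    rw [UMat_eq_one_add_heisenbergNil h0 hw0 hwl]
    congr 2
    rw [Complex.star_def, Complex.add_conj, Complex.ofReal_mul, Complex.ofReal_ofNat] at hc
    linear_combination (1 / 2 : ℂ) * hc - Complex.re_add_im c

/-- (i) 𝒰 is a subgroup of U(n,1) all of whose elements are
unipotent; (ii) conversely, every unipotent element of U(n,1) in block
upper-triangular form with 1's in the two corners belongs to 𝒰. -/
theorem maximal_unipotent_subgroup (n : ℕ) (hn : 1 ≤ n) :
    (((1 : Matrix (Fin (n + 1)) (Fin (n + 1)) ℂ) ∈ MaxUnip n) ∧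
     (∀ A ∈ MaxUnip n, ∀ B ∈ MaxUnip n, A * B ∈ MaxUnip n) ∧
     (∀ A ∈ MaxUnip n, ∃ B ∈ MaxUnip n, A * B = 1 ∧ B * A = 1) ∧
     MaxUnip n ⊆ USet n ∧
     (∀ A ∈ MaxUnip n, IsNilpotent (A - 1))) ∧
    (∀ A : Matrix (Fin (n + 1)) (Fin (n + 1)) ℂ,
      A ∈ USet n → IsNilpotent (A - 1) →
      A 0 0 = 1 → A (Fin.last n) (Fin.last n) = 1 →
      (∀ i, i ≠ 0 → A i 0 = 0) →
      (∀ j, j ≠ Fin.last n → A (Fin.last n) j = 0) →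
      A ∈ MaxUnip n) := by
  have h0 : (0 : Fin (n + 1)) ≠ Fin.last n := Fin.ne_of_val_ne (by simp; omega)
  rw [MaxUnip_eq_heisenbergSet h0]
  refine ⟨⟨one_mem_heisenbergSet, fun A hA B hB => mul_mem_heisenbergSet h0 hA hB,
    fun A hA => exists_mul_eq_one_of_mem_heisenbergSet h0 hA,
    fun A hA => mem_USet_iff.2 (conjTranspose_mul_swap_mul_of_mem_heisenbergSet h0 hA),
    fun A hA => isNilpotent_sub_one_of_mem_heisenbergSet h0 hA⟩, ?_⟩
  intro A hA hnil h00 hll hcol hrow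
  exact mem_heisenbergSet_of_isNilpotent_sub_one h0 (mem_USet_iff.1 hA) hnil h00 hll hcol hrow
end
end

section
/- Let n ≥ 1 and let e₁ = (1,0,…,0) ∈ ℂ^{n+1} (a q-isotropic vector). A matrix A ∈ GL(n+1,ℂ) belongs to U(n,1) and maps the complex line ℂ·e₁ to itself if and only if there exist λ ∈ ℂ with λ ≠ 0, a matrix σ ∈ M_{n−1}(ℂ) with conj(σ)ᵀσ = I_{n−1}, a vector v ∈ ℂ^{n−1} and a ∈ ℂ with Re(λ·a) = −(1/2)·conj(v)ᵀv, such that A is the block matrix [[conj(λ), −conj(v)ᵀ, a],[0, σ, λ⁻¹σv],[0,0,λ⁻¹]] (blocks of sizes 1, n−1, 1). -/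
open Matrix

noncomputable section

/-- The block matrix [[conj λ, −v*, a],[0, σ, λ⁻¹ σ v],[0,0,λ⁻¹]], where
v ∈ ℂ^{n-1} and σ ∈ M_{n-1}(ℂ) are encoded as supported on the middle
indices. -/
def PMat (n : ℕ) (l : ℂ) (σ : Matrix (Fin (n + 1)) (Fin (n + 1)) ℂ)
    (v : Fin (n + 1) → ℂ) (a : ℂ) : Matrix (Fin (n + 1)) (Fin (n + 1)) ℂ :=
  fun i j =>
    if i = 0 then
      (if j = 0 then (starRingEnd ℂ) l
       else if j = Fin.last n then a
       else -((starRingEnd ℂ) (v j)))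
    else if i = Fin.last n then (if j = Fin.last n then l⁻¹ else 0)
    else (if j = Fin.last n then l⁻¹ * σ.mulVec v i else σ i j)

/-!
Write `c = A 0 0`. If `A ∈ U(n,1)` fixes the line `ℂ e₀`, then `Aᴴ H A = H` read in row `0`
forces the last row of `A` to be `c̄⁻¹ e_lastᵀ`, and read on the middle block it says that the
middle block `σ` is unitary. Since `H` is the permutation matrix of the transposition
`(0 last)`, `H² = 1` and hence also `A H Aᴴ = H`; read in column `0` this gives the middle of the
last column, `c̄⁻¹ σ v`, and at `(0, 0)` the condition `2 Re (c̄ a) + |v|² = 0`. Conversely, the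
entries of `Pᴴ H P` for `P = PMat n l σ v a` follow from `σᴴ σ v = v` and `|σ v|² = |v|²`.
-/

section HMat

variable {n : ℕ}

lemma HMat_eq_permMatrix_swap : HMat n = (Equiv.swap 0 (Fin.last n)).permMatrix ℂ := by
  ext i j
  rw [Equiv.Perm.permMatrix, PEquiv.toMatrix_toPEquiv_apply, Pi.single_apply, HMat,
    Equiv.swap_apply_def]
  split_ifs <;> grind

lemma HMat_mul_self : HMat n * HMat n = 1 := by
  rw [HMat_eq_permMatrix_swap, ← Matrix.permMatrix_mul, Equiv.swap_mul_self,
    Matrix.permMatrix_one]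

lemma conjTranspose_mem_USet {A : Matrix (Fin (n + 1)) (Fin (n + 1)) ℂ} (hA : A ∈ USet n) :
    Aᴴ ∈ USet n := by
  have hA : Aᴴ * HMat n * A = HMat n := hA
  have hinv : (HMat n * Aᴴ * HMat n) * A = 1 := by
    simp only [Matrix.mul_assoc] at hA ⊢
    rw [hA, HMat_mul_self]
  have h := congrArg (· * HMat n) (mul_eq_one_comm.mp hinv)
  simp only [Matrix.mul_assoc, HMat_mul_self, Matrix.mul_one, Matrix.one_mul] at h
  show Aᴴᴴ * HMat n * Aᴴ = HMat n
  rw [conjTranspose_conjTranspose, Matrix.mul_assoc, h]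

lemma last_ne_zero_of_one_le (hn : 1 ≤ n) : Fin.last n ≠ 0 := by
  simp only [ne_eq, Fin.ext_iff, Fin.val_last, Fin.val_zero]
  omega

def midIdx (n : ℕ) : Finset (Fin (n + 1)) := {k | k ≠ 0 ∧ k ≠ Fin.last n}

lemma mem_midIdx {k : Fin (n + 1)} : k ∈ midIdx n ↔ k ≠ 0 ∧ k ≠ Fin.last n := by
  simp [midIdx]

lemma eq_zero_or_eq_last_or_mem_midIdx (k : Fin (n + 1)) :
    k = 0 ∨ k = Fin.last n ∨ k ∈ midIdx n := by
  rw [mem_midIdx]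
  tauto

lemma sum_midIdx_eq_sum {M : Type*} [AddCommMonoid M] {f : Fin (n + 1) → M}
    (h0 : f 0 = 0) (hl : f (Fin.last n) = 0) : ∑ k ∈ midIdx n, f k = ∑ k, f k :=
  Finset.sum_subset (Finset.subset_univ _) fun k _ hk => by
    rcases eq_zero_or_eq_last_or_mem_midIdx k with rfl | rfl | h
    exacts [h0, hl, absurd h hk]

lemma sum_eq_zero_add_last_add_sum_midIdx (hn : 1 ≤ n) {M : Type*} [AddCommMonoid M]
    (f : Fin (n + 1) → M) : ∑ k, f k = f 0 + f (Fin.last n) + ∑ k ∈ midIdx n, f k := by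
  have h : midIdx n = ({0, Fin.last n} : Finset _)ᶜ := by
    ext k
    simp [mem_midIdx]
  rw [h, ← Finset.sum_add_sum_compl {0, Fin.last n},
    Finset.sum_pair (last_ne_zero_of_one_le hn).symm]

lemma conjTranspose_mul_HMat_mul_apply (hn : 1 ≤ n)
    (B C : Matrix (Fin (n + 1)) (Fin (n + 1)) ℂ) (i j : Fin (n + 1)) :
    (Bᴴ * HMat n * C) i j = star (B 0 i) * C (Fin.last n) j + star (B (Fin.last n) i) * C 0 j +
      ∑ k ∈ midIdx n, star (B k i) * C k j := by
  rw [Matrix.mul_assoc, HMat_eq_permMatrix_swap, Equiv.Perm.permMatrix,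
    PEquiv.toMatrix_toPEquiv_mul, Matrix.mul_apply, sum_eq_zero_add_last_add_sum_midIdx hn]
  refine congrArg₂ (· + ·) (by simp) (Finset.sum_congr rfl fun k hk => ?_)
  rw [mem_midIdx] at hk
  simp [Equiv.swap_apply_of_ne_of_ne hk.1 hk.2]

lemma mul_HMat_mul_conjTranspose_apply (hn : 1 ≤ n)
    (B C : Matrix (Fin (n + 1)) (Fin (n + 1)) ℂ) (i j : Fin (n + 1)) :
    (B * HMat n * Cᴴ) i j = B i 0 * star (C j (Fin.last n)) + B i (Fin.last n) * star (C j 0) +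
      ∑ k ∈ midIdx n, B i k * star (C j k) := by
  simpa using conjTranspose_mul_HMat_mul_apply hn Bᴴ Cᴴ i j

lemma HMat_zero_apply (hn : 1 ≤ n) (j : Fin (n + 1)) :
    HMat n 0 j = if j = Fin.last n then 1 else 0 := by
  simp [HMat, (last_ne_zero_of_one_le hn).symm]

lemma HMat_last_apply (hn : 1 ≤ n) (j : Fin (n + 1)) :
    HMat n (Fin.last n) j = if j = 0 then 1 else 0 := by
  simp [HMat, last_ne_zero_of_one_le hn]

lemma HMat_apply_of_mem_midIdx {i : Fin (n + 1)} (hi : i ∈ midIdx n) (j : Fin (n + 1)) :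
    HMat n i j = if i = j then 1 else 0 := by
  rw [mem_midIdx] at hi
  simp [HMat, hi.1, hi.2]

end HMat

lemma Matrix.map_mulVecLin_span_single_eq_iff {K ι : Type*} [Field K] [Fintype ι]
    [DecidableEq ι] (A : Matrix ι ι K) (k : ι) :
    Submodule.map A.mulVecLin (Submodule.span K {Pi.single k 1}) =
        Submodule.span K {Pi.single k 1} ↔ A k k ≠ 0 ∧ ∀ i, i ≠ k → A i k = 0 := by
  rw [Submodule.map_span, Set.image_singleton, mulVecLin_apply, mulVec_single_one, eq_comm,
    Submodule.span_singleton_eq_span_singleton]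
  constructor
  · rintro ⟨z, hz⟩
    refine ⟨fun h => ?_, fun i hi => ?_⟩
    · simpa [h, Units.smul_def] using congrFun hz k
    · simpa [hi] using (congrFun hz i).symm
  · rintro ⟨hkk, hcol⟩
    refine ⟨Units.mk0 _ hkk, funext fun i => ?_⟩
    by_cases hi : i = k
    · subst hi
      simp
    · simp [hi, hcol i hi]

lemma Matrix.mulVec_apply_eq_zero_of_row_eq_zero {m o R : Type*} [Fintype o]
    [NonUnitalNonAssocSemiring R] {M : Matrix m o R} {w : o → R} {i : m} (h : ∀ j, M i j = 0) :
    (M *ᵥ w) i = 0 := by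
  simp [mulVec, dotProduct, h]

section USet

variable {n : ℕ} {A : Matrix (Fin (n + 1)) (Fin (n + 1)) ℂ}

def midBlock (A : Matrix (Fin (n + 1)) (Fin (n + 1)) ℂ) : Matrix (Fin (n + 1)) (Fin (n + 1)) ℂ :=
  Matrix.of fun i j => if i ∈ midIdx n ∧ j ∈ midIdx n then A i j else 0

def topRowVec (A : Matrix (Fin (n + 1)) (Fin (n + 1)) ℂ) : Fin (n + 1) → ℂ :=
  fun j => if j ∈ midIdx n then -star (A 0 j) else 0

lemma midBlock_apply_eq_zero {i j : Fin (n + 1)}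
    (h : i = 0 ∨ i = Fin.last n ∨ j = 0 ∨ j = Fin.last n) : midBlock A i j = 0 := by
  simp only [midBlock, of_apply, mem_midIdx]
  rw [if_neg]
  tauto

@[simp]
lemma topRowVec_zero : topRowVec A 0 = 0 := by
  simp [topRowVec, mem_midIdx]

@[simp]
lemma topRowVec_last : topRowVec A (Fin.last n) = 0 := by
  simp [topRowVec, mem_midIdx]

lemma midBlock_mulVec_topRowVec_apply {i : Fin (n + 1)} (hi : i ∈ midIdx n) :
    (midBlock A *ᵥ topRowVec A) i = -∑ k ∈ midIdx n, A i k * star (A 0 k) := by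
  rw [mulVec, dotProduct, ← sum_midIdx_eq_sum (by simp) (by simp), ← Finset.sum_neg_distrib]
  exact Finset.sum_congr rfl fun k hk => by simp [midBlock, topRowVec, hi, hk]

lemma star_topRowVec_dotProduct_topRowVec :
    star (topRowVec A) ⬝ᵥ topRowVec A = ∑ k ∈ midIdx n, A 0 k * star (A 0 k) := by
  rw [dotProduct, ← sum_midIdx_eq_sum (by simp) (by simp)]
  exact Finset.sum_congr rfl fun k hk => by simp [topRowVec, hk]

lemma apply_last_mul_star_of_mem_USet (hn : 1 ≤ n) (hU : A ∈ USet n)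
    (hcol : ∀ i, i ≠ 0 → A i 0 = 0) (j : Fin (n + 1)) :
    A (Fin.last n) j * star (A 0 0) = if j = Fin.last n then 1 else 0 := by
  have h := congrFun₂ hU 0 j
  rw [conjTranspose_mul_HMat_mul_apply hn, HMat_zero_apply hn,
    Finset.sum_eq_zero fun k hk => by rw [hcol k (mem_midIdx.1 hk).1, star_zero, zero_mul],
    hcol _ (last_ne_zero_of_one_le hn)] at h
  simpa [mul_comm] using h

lemma star_apply_zero_zero_ne_zero_of_mem_USet (hn : 1 ≤ n) (hU : A ∈ USet n)
    (hcol : ∀ i, i ≠ 0 → A i 0 = 0) : star (A 0 0) ≠ 0 :=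
  right_ne_zero_of_mul_eq_one
    (by simpa using apply_last_mul_star_of_mem_USet hn hU hcol (Fin.last n))

lemma apply_last_of_mem_USet (hn : 1 ≤ n) (hU : A ∈ USet n)
    (hcol : ∀ i, i ≠ 0 → A i 0 = 0) (j : Fin (n + 1)) :
    A (Fin.last n) j = if j = Fin.last n then (star (A 0 0))⁻¹ else 0 := by
  have h := apply_last_mul_star_of_mem_USet hn hU hcol j
  split_ifs at h ⊢
  exacts [eq_inv_of_mul_eq_one_left h,
    (mul_eq_zero.1 h).resolve_right (star_apply_zero_zero_ne_zero_of_mem_USet hn hU hcol)]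

lemma apply_last_mul_star_of_mem_midIdx_of_mem_USet (hn : 1 ≤ n) (hU : A ∈ USet n)
    (hcol : ∀ i, i ≠ 0 → A i 0 = 0) {i : Fin (n + 1)} (hi : i ∈ midIdx n) :
    A i (Fin.last n) * star (A 0 0) = -∑ k ∈ midIdx n, A i k * star (A 0 k) := by
  have h := congrFun₂ (conjTranspose_mem_USet hU) i 0
  rw [conjTranspose_conjTranspose, mul_HMat_mul_conjTranspose_apply hn,
    HMat_apply_of_mem_midIdx hi, if_neg (mem_midIdx.1 hi).1, hcol i (mem_midIdx.1 hi).1] at h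
  linear_combination h

lemma re_star_mul_eq_of_mem_USet (hn : 1 ≤ n) (hU : A ∈ USet n) :
    (star (A 0 0) * A 0 (Fin.last n)).re =
      -(1 / 2) * (star (topRowVec A) ⬝ᵥ topRowVec A).re := by
  have h := congrArg Complex.re (congrFun₂ (conjTranspose_mem_USet hU) 0 0)
  rw [conjTranspose_conjTranspose, mul_HMat_mul_conjTranspose_apply hn, HMat_zero_apply hn,
    if_neg (last_ne_zero_of_one_le hn).symm, ← star_topRowVec_dotProduct_topRowVec] at h
  simp only [Complex.add_re, Complex.mul_re, Complex.star_def, Complex.conj_re,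
    Complex.conj_im, Complex.zero_re] at h ⊢
  linarith

lemma conjTranspose_midBlock_mul_midBlock_apply (hn : 1 ≤ n) (hU : A ∈ USet n)
    (hcol : ∀ i, i ≠ 0 → A i 0 = 0) {i j : Fin (n + 1)} (hi : i ∈ midIdx n)
    (hj : j ∈ midIdx n) : ((midBlock A)ᴴ * midBlock A) i j = if i = j then 1 else 0 := by
  have h := congrFun₂ hU i j
  rw [conjTranspose_mul_HMat_mul_apply hn, HMat_apply_of_mem_midIdx hi,
    apply_last_of_mem_USet hn hU hcol, apply_last_of_mem_USet hn hU hcol,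
    if_neg (mem_midIdx.1 hi).2, if_neg (mem_midIdx.1 hj).2] at h
  rw [mul_apply, ← sum_midIdx_eq_sum (by simp [midBlock_apply_eq_zero])
    (by simp [midBlock_apply_eq_zero]), ← h]
  simpa using Finset.sum_congr rfl fun k hk => by simp [midBlock, hi, hj, hk]

theorem eq_PMat_of_mem_USet (hn : 1 ≤ n) (hU : A ∈ USet n) (hcol : ∀ i, i ≠ 0 → A i 0 = 0) :
    A = PMat n (star (A 0 0)) (midBlock A) (topRowVec A) (A 0 (Fin.last n)) := by
  have hl0 := last_ne_zero_of_one_le hn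
  ext i j
  rcases eq_zero_or_eq_last_or_mem_midIdx i with rfl | rfl | hi
  · rcases eq_zero_or_eq_last_or_mem_midIdx j with rfl | rfl | hj
    · simp [PMat]
    · simp [PMat, hl0]
    · simp [PMat, topRowVec, hj, mem_midIdx.1 hj]
  · simp [PMat, hl0, apply_last_of_mem_USet hn hU hcol]
  · have hi' := mem_midIdx.1 hi
    rcases eq_zero_or_eq_last_or_mem_midIdx j with rfl | rfl | hj
    · rw [PMat, if_neg hi'.1, if_neg hi'.2, if_neg hl0.symm, midBlock_apply_eq_zero (by tauto),
        hcol i hi'.1]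
    · rw [PMat, if_neg hi'.1, if_neg hi'.2, if_pos rfl, midBlock_mulVec_topRowVec_apply hi,
        ← apply_last_mul_star_of_mem_midIdx_of_mem_USet hn hU hcol hi, mul_comm,
        mul_inv_cancel_right₀ (star_apply_zero_zero_ne_zero_of_mem_USet hn hU hcol)]
    · simp [PMat, hi', mem_midIdx.1 hj, midBlock, hi, hj]

end USet

section PMat

variable {n : ℕ} {l a : ℂ} {σ : Matrix (Fin (n + 1)) (Fin (n + 1)) ℂ} {v : Fin (n + 1) → ℂ}

lemma PMat_last_apply (hn : 1 ≤ n) (j : Fin (n + 1)) :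
    PMat n l σ v a (Fin.last n) j = if j = Fin.last n then l⁻¹ else 0 := by
  simp [PMat, last_ne_zero_of_one_le hn]

lemma PMat_apply_of_mem_midIdx {i : Fin (n + 1)} (hi : i ∈ midIdx n) (j : Fin (n + 1)) :
    PMat n l σ v a i j = if j = Fin.last n then l⁻¹ * (σ *ᵥ v) i else σ i j := by
  rw [mem_midIdx] at hi
  simp [PMat, hi.1, hi.2]

lemma PMat_apply_zero_right (hn : 1 ≤ n)
    (hσ0 : ∀ i j, (i = 0 ∨ i = Fin.last n ∨ j = 0 ∨ j = Fin.last n) → σ i j = 0)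
    {i : Fin (n + 1)} (hi : i ≠ 0) : PMat n l σ v a i 0 = 0 := by
  have h0l := (last_ne_zero_of_one_le hn).symm
  rcases eq_zero_or_eq_last_or_mem_midIdx i with rfl | rfl | hi'
  · exact absurd rfl hi
  · rw [PMat_last_apply hn, if_neg h0l]
  · rw [PMat_apply_of_mem_midIdx hi', if_neg h0l, hσ0 i 0 (by tauto)]

lemma conjTranspose_mul_self_apply_eq_zero
    (hσ0 : ∀ i j, (i = 0 ∨ i = Fin.last n ∨ j = 0 ∨ j = Fin.last n) → σ i j = 0)
    (i j : Fin (n + 1)) (h : i = 0 ∨ i = Fin.last n ∨ j = 0 ∨ j = Fin.last n) :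
    (σᴴ * σ) i j = 0 := by
  rcases h with rfl | rfl | rfl | rfl <;> simp [mul_apply, hσ0]

lemma sum_midIdx_star_mul_eq_conjTranspose_mul_apply
    (hσ0 : ∀ i j, (i = 0 ∨ i = Fin.last n ∨ j = 0 ∨ j = Fin.last n) → σ i j = 0)
    (i j : Fin (n + 1)) : ∑ k ∈ midIdx n, star (σ k i) * σ k j = (σᴴ * σ) i j := by
  rw [mul_apply, sum_midIdx_eq_sum (by simp [hσ0]) (by simp [hσ0])]
  rfl

lemma conjTranspose_mulVec_mulVec_eq_self
    (hσ0 : ∀ i j, (i = 0 ∨ i = Fin.last n ∨ j = 0 ∨ j = Fin.last n) → σ i j = 0)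
    (hσu : ∀ i j, i ≠ 0 → i ≠ Fin.last n → j ≠ 0 → j ≠ Fin.last n →
      (σᴴ * σ) i j = if i = j then 1 else 0)
    (hv0 : v 0 = 0) (hvl : v (Fin.last n) = 0) : σᴴ *ᵥ (σ *ᵥ v) = v := by
  ext i
  rw [mulVec_mulVec]
  rcases eq_zero_or_eq_last_or_mem_midIdx i with rfl | rfl | hi
  · exact (mulVec_apply_eq_zero_of_row_eq_zero fun j =>
      conjTranspose_mul_self_apply_eq_zero hσ0 _ j (by tauto)).trans hv0.symm
  · exact (mulVec_apply_eq_zero_of_row_eq_zero fun j =>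
      conjTranspose_mul_self_apply_eq_zero hσ0 _ j (by tauto)).trans hvl.symm
  · have hi' := mem_midIdx.1 hi
    rw [mulVec, dotProduct, ← sum_midIdx_eq_sum (by simp [hv0]) (by simp [hvl]),
      Finset.sum_congr rfl fun j hj => by
        rw [hσu i j hi'.1 hi'.2 (mem_midIdx.1 hj).1 (mem_midIdx.1 hj).2, ite_mul, one_mul,
          zero_mul],
      Finset.sum_ite_eq, if_pos hi]

lemma sum_midIdx_star_mul_mulVec
    (hσ0 : ∀ i j, (i = 0 ∨ i = Fin.last n ∨ j = 0 ∨ j = Fin.last n) → σ i j = 0)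
    (hσu : ∀ i j, i ≠ 0 → i ≠ Fin.last n → j ≠ 0 → j ≠ Fin.last n →
      (σᴴ * σ) i j = if i = j then 1 else 0)
    (hv0 : v 0 = 0) (hvl : v (Fin.last n) = 0) (i : Fin (n + 1)) :
    ∑ k ∈ midIdx n, star (σ k i) * (σ *ᵥ v) k = v i := by
  rw [sum_midIdx_eq_sum (by simp [hσ0]) (by simp [hσ0]),
    ← congrFun (conjTranspose_mulVec_mulVec_eq_self hσ0 hσu hv0 hvl) i]
  rfl

lemma sum_midIdx_star_mulVec_mul_mulVec
    (hσ0 : ∀ i j, (i = 0 ∨ i = Fin.last n ∨ j = 0 ∨ j = Fin.last n) → σ i j = 0)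
    (hσu : ∀ i j, i ≠ 0 → i ≠ Fin.last n → j ≠ 0 → j ≠ Fin.last n →
      (σᴴ * σ) i j = if i = j then 1 else 0)
    (hv0 : v 0 = 0) (hvl : v (Fin.last n) = 0) :
    ∑ k ∈ midIdx n, star ((σ *ᵥ v) k) * (σ *ᵥ v) k = star v ⬝ᵥ v := by
  have hx0 : (σ *ᵥ v) 0 = 0 := mulVec_apply_eq_zero_of_row_eq_zero fun j => hσ0 0 j (by tauto)
  have hxl : (σ *ᵥ v) (Fin.last n) = 0 :=
    mulVec_apply_eq_zero_of_row_eq_zero fun j => hσ0 _ j (by tauto)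
  calc ∑ k ∈ midIdx n, star ((σ *ᵥ v) k) * (σ *ᵥ v) k = star (σ *ᵥ v) ⬝ᵥ (σ *ᵥ v) := by
        rw [sum_midIdx_eq_sum (by simp [hx0]) (by simp [hxl])]
        rfl
    _ = star v ⬝ᵥ (σᴴ *ᵥ (σ *ᵥ v)) := by rw [star_mulVec, ← dotProduct_mulVec]
    _ = star v ⬝ᵥ v := by rw [conjTranspose_mulVec_mulVec_eq_self hσ0 hσu hv0 hvl]

open scoped ComplexOrder in
lemma star_mul_inv_add_star_inv_mul_add_dotProduct_eq_zero (hl : l ≠ 0)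
    (hre : (l * a).re = -(1 / 2) * (star v ⬝ᵥ v).re) :
    star a * l⁻¹ + star l⁻¹ * a + star l⁻¹ * l⁻¹ * (star v ⬝ᵥ v) = 0 := by
  have him := (Complex.nonneg_iff.1 (dotProduct_star_self_nonneg v)).2
  have key : l * a + star l * star a + star v ⬝ᵥ v = 0 := by
    apply Complex.ext <;> simp only [Complex.add_re, Complex.add_im, Complex.mul_re,
      Complex.mul_im, Complex.star_def, Complex.conj_re, Complex.conj_im, Complex.zero_re,
      Complex.zero_im] at hre ⊢ <;> linarith
  have hinv : l⁻¹ * l = 1 := inv_mul_cancel₀ hl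
  have hinv' : star l⁻¹ * star l = 1 := by rw [← star_mul', hinv, star_one]
  linear_combination (star l⁻¹ * l⁻¹) * key - star a * l⁻¹ * hinv' - star l⁻¹ * a * hinv

lemma sum_midIdx_star_PMat_mul_PMat
    (hσ0 : ∀ i j, (i = 0 ∨ i = Fin.last n ∨ j = 0 ∨ j = Fin.last n) → σ i j = 0)
    (hσu : ∀ i j, i ≠ 0 → i ≠ Fin.last n → j ≠ 0 → j ≠ Fin.last n →
      (σᴴ * σ) i j = if i = j then 1 else 0)
    (hv0 : v 0 = 0) (hvl : v (Fin.last n) = 0) (i j : Fin (n + 1)) :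
    ∑ k ∈ midIdx n, star (PMat n l σ v a k i) * PMat n l σ v a k j =
      if i = Fin.last n then
        (if j = Fin.last n then star l⁻¹ * l⁻¹ * (star v ⬝ᵥ v) else star l⁻¹ * star (v j))
      else if j = Fin.last n then l⁻¹ * v i else (σᴴ * σ) i j := by
  rw [Finset.sum_congr rfl fun k hk => by
    rw [PMat_apply_of_mem_midIdx hk, PMat_apply_of_mem_midIdx hk]]
  have hσx := sum_midIdx_star_mul_mulVec hσ0 hσu hv0 hvl
  split_ifs
  · rw [← sum_midIdx_star_mulVec_mul_mulVec hσ0 hσu hv0 hvl, Finset.mul_sum]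
    exact Finset.sum_congr rfl fun k _ => by rw [star_mul']; ring
  · rw [← hσx, star_sum, Finset.mul_sum]
    exact Finset.sum_congr rfl fun k _ => by rw [star_mul', star_mul', star_star]; ring
  · rw [← hσx, Finset.mul_sum]
    exact Finset.sum_congr rfl fun k _ => by ring
  · exact sum_midIdx_star_mul_eq_conjTranspose_mul_apply hσ0 i j

theorem PMat_mem_USet (hn : 1 ≤ n) (hl : l ≠ 0)
    (hσ0 : ∀ i j, (i = 0 ∨ i = Fin.last n ∨ j = 0 ∨ j = Fin.last n) → σ i j = 0)
    (hσu : ∀ i j, i ≠ 0 → i ≠ Fin.last n → j ≠ 0 → j ≠ Fin.last n →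
      (σᴴ * σ) i j = if i = j then 1 else 0)
    (hv0 : v 0 = 0) (hvl : v (Fin.last n) = 0)
    (hre : (l * a).re = -(1 / 2) * (star v ⬝ᵥ v).re) :
    PMat n l σ v a ∈ USet n := by
  have hl0 := last_ne_zero_of_one_le hn
  show (PMat n l σ v a)ᴴ * HMat n * PMat n l σ v a = HMat n
  ext i j
  rw [conjTranspose_mul_HMat_mul_apply hn, PMat_last_apply hn, PMat_last_apply hn,
    sum_midIdx_star_PMat_mul_PMat hσ0 hσu hv0 hvl]
  have hσσ := conjTranspose_mul_self_apply_eq_zero hσ0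
  rcases eq_zero_or_eq_last_or_mem_midIdx i with rfl | rfl | hi
  · rcases eq_zero_or_eq_last_or_mem_midIdx j with rfl | rfl | hj
    · simp [PMat, hl0.symm, hσσ, HMat_zero_apply hn]
    · simp [PMat, hl0, hl0.symm, hv0, HMat_zero_apply hn, hl]
    · simp [PMat, hl0.symm, hσσ, HMat_zero_apply hn, mem_midIdx.1 hj]
  · rcases eq_zero_or_eq_last_or_mem_midIdx j with rfl | rfl | hj
    · simp [PMat, hl0, hl0.symm, hv0, HMat_last_apply hn, hl]
    · simpa [PMat, hl0, HMat_last_apply hn] using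
        star_mul_inv_add_star_inv_mul_add_dotProduct_eq_zero hl hre
    · simp [PMat, hl0, mem_midIdx.1 hj, HMat_last_apply hn]
  · obtain ⟨hi0, hil⟩ := mem_midIdx.1 hi
    rcases eq_zero_or_eq_last_or_mem_midIdx j with rfl | rfl | hj
    · simp [PMat, hl0.symm, hσσ, HMat_apply_of_mem_midIdx hi, hi0, hil]
    · simp [PMat, hl0, HMat_apply_of_mem_midIdx hi, hi0, hil, mul_comm]
    · simp [PMat, HMat_apply_of_mem_midIdx hi, hi0, hil, mem_midIdx.1 hj, hσu i j]

end PMat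

theorem parabolic_characterization_general (n : ℕ) (hn : 1 ≤ n)
    (A : Matrix (Fin (n + 1)) (Fin (n + 1)) ℂ) :
    (A ∈ USet n ∧
      Submodule.map (Matrix.mulVecLin A)
          (Submodule.span ℂ {(Pi.single 0 1 : Fin (n + 1) → ℂ)}) =
        Submodule.span ℂ {(Pi.single 0 1 : Fin (n + 1) → ℂ)}) ↔
    ∃ (l : ℂ) (σ : Matrix (Fin (n + 1)) (Fin (n + 1)) ℂ)
      (v : Fin (n + 1) → ℂ) (a : ℂ),
      l ≠ 0 ∧
      (∀ i j, (i = 0 ∨ i = Fin.last n ∨ j = 0 ∨ j = Fin.last n) → σ i j = 0) ∧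
      (∀ i j, i ≠ 0 → i ≠ Fin.last n → j ≠ 0 → j ≠ Fin.last n →
        (σᴴ * σ) i j = if i = j then 1 else 0) ∧
      v 0 = 0 ∧ v (Fin.last n) = 0 ∧
      (l * a).re = -(1 / 2) * (dotProduct (star v) v).re ∧
      A = PMat n l σ v a := by
  rw [Matrix.map_mulVecLin_span_single_eq_iff]
  constructor
  · rintro ⟨hU, -, hcol⟩
    exact ⟨_, _, _, _, star_apply_zero_zero_ne_zero_of_mem_USet hn hU hcol,
      fun i j => midBlock_apply_eq_zero,
      fun i j hi0 hil hj0 hjl => conjTranspose_midBlock_mul_midBlock_apply hn hU hcol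
        (mem_midIdx.2 ⟨hi0, hil⟩) (mem_midIdx.2 ⟨hj0, hjl⟩),
      topRowVec_zero, topRowVec_last, re_star_mul_eq_of_mem_USet hn hU,
      eq_PMat_of_mem_USet hn hU hcol⟩
  · rintro ⟨l, σ, v, a, hl, hσ0, hσu, hv0, hvl, hre, rfl⟩
    exact ⟨PMat_mem_USet hn hl hσ0 hσu hv0 hvl hre, by simpa [PMat] using hl,
      fun i hi => PMat_apply_zero_right hn hσ0 hi⟩

/-- characterization of the elements of U(n,1) preserving the
isotropic complex line ℂ·e₁ (the parabolic subgroup 𝒫). -/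
theorem parabolic_characterization (n : ℕ) (hn : 1 ≤ n)
    (A : Matrix (Fin (n + 1)) (Fin (n + 1)) ℂ) (hA : IsUnit A.det) :
    (A ∈ USet n ∧
      Submodule.map (Matrix.mulVecLin A)
          (Submodule.span ℂ {(Pi.single 0 1 : Fin (n + 1) → ℂ)}) =
        Submodule.span ℂ {(Pi.single 0 1 : Fin (n + 1) → ℂ)}) ↔
    ∃ (l : ℂ) (σ : Matrix (Fin (n + 1)) (Fin (n + 1)) ℂ)
      (v : Fin (n + 1) → ℂ) (a : ℂ),
      l ≠ 0 ∧
      (∀ i j, (i = 0 ∨ i = Fin.last n ∨ j = 0 ∨ j = Fin.last n) → σ i j = 0) ∧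
      (∀ i j, i ≠ 0 → i ≠ Fin.last n → j ≠ 0 → j ≠ Fin.last n →
        (σᴴ * σ) i j = if i = j then 1 else 0) ∧
      v 0 = 0 ∧ v (Fin.last n) = 0 ∧
      (l * a).re = -(1 / 2) * (dotProduct (star v) v).re ∧
      A = PMat n l σ v a :=
  parabolic_characterization_general n hn A
end
end

section
/- Let n ≥ 1, let W = ℂ^{n−1} regarded as a real vector space, and let γ₂ : W → W be an ℝ-linear map such that range γ₂ ⊆ ker γ₂, J(range γ₂) ⊆ ker γ₂, and ω(x,y) = 0 for all x,y ∈ range γ₂. Then range γ₂ ∩ J(range γ₂) = {0}, and 3·dim_ℝ(range γ₂) ≤ 2n − 2. -/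
/-!
Writing `R = range γ₂`, a vector `x ∈ R ∩ J R`, say `x = J y` with `y ∈ R`, satisfies
`0 = ω(x, y) = ⟨x, J y⟩ = ⟨x, x⟩`, so `R ∩ J R = 0`. Hence `R ⊕ J R` is a subspace of
`ker γ₂` of dimension `2 · rank γ₂`, and rank–nullity gives `3 · rank γ₂ ≤ dim_ℝ W = 2n − 2`.
-/

open Matrix

noncomputable section

/-- W = ℂ^{n-1} viewed as a real vector space. -/
abbrev HW (n : ℕ) : Type := Fin (n - 1) → ℂ

/-- The real inner product ⟨u,v⟩ = Re Σ uᵢ conj(vᵢ). -/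
def rInner {n : ℕ} (u v : HW n) : ℝ := (dotProduct u (star v)).re

/-- The symplectic form ω(u,v) = ⟨u, Jv⟩ with J = multiplication by i. -/
def rOmega {n : ℕ} (u v : HW n) : ℝ := rInner u (Complex.I • v)

open Module LinearMap

theorem LinearMap.three_mul_finrank_range_le {K V : Type*} [DivisionRing K] [AddCommGroup V]
    [Module K V] [FiniteDimensional K V] (f : V →ₗ[K] V) (e : V ≃ₗ[K] V)
    (hdisj : Disjoint (range f) ((range f).map (e : V →ₗ[K] V))) (hf : range f ≤ ker f)
    (he : (range f).map (e : V →ₗ[K] V) ≤ ker f) :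
    3 * finrank K (range f) ≤ finrank K V := by
  have hsup := Submodule.finrank_sup_add_finrank_inf_eq (range f) ((range f).map (e : V →ₗ[K] V))
  rw [hdisj.eq_bot, finrank_bot, e.finrank_map_eq] at hsup
  have hker := Submodule.finrank_mono (sup_le hf he)
  have := f.finrank_range_add_finrank_ker
  omega

theorem finrank_HW (n : ℕ) : finrank ℝ (HW n) = 2 * (n - 1) := by
  simp [finrank_pi_fintype, mul_comm]

theorem rInner_self {n : ℕ} (x : HW n) : rInner x x = ∑ i, Complex.normSq (x i) := by
  simp [rInner, dotProduct, Complex.mul_conj]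

theorem eq_zero_of_rInner_self_eq_zero {n : ℕ} {x : HW n} (h : rInner x x = 0) : x = 0 := by
  rw [rInner_self, Finset.sum_eq_zero_iff_of_nonneg fun i _ ↦ Complex.normSq_nonneg (x i)] at h
  funext i
  simpa using h i (Finset.mem_univ i)

theorem eq_zero_of_rOmega_eq_zero_of_I_smul_eq {n : ℕ} {x y : HW n} (h : rOmega x y = 0)
    (hxy : Complex.I • y = x) : x = 0 := by
  rw [rOmega, hxy] at h
  exact eq_zero_of_rInner_self_eq_zero h

theorem rank_gamma2_bound_general (n : ℕ)
    (γ₂ : HW n →ₗ[ℝ] HW n)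
    (h1 : ∀ u, γ₂ (γ₂ u) = 0)
    (h2 : ∀ u, γ₂ (Complex.I • γ₂ u) = 0)
    (h3 : ∀ u u', rOmega (γ₂ u) (γ₂ u') = 0) :
    (∀ x : HW n, (∃ u, γ₂ u = x) → (∃ u, Complex.I • γ₂ u = x) → x = 0) ∧
      3 * Module.finrank ℝ (LinearMap.range γ₂) ≤ 2 * n - 2 := by
  have hdisj : ∀ x : HW n, (∃ u, γ₂ u = x) → (∃ u, Complex.I • γ₂ u = x) → x = 0 := by
    rintro _ ⟨u, rfl⟩ ⟨u', hu'⟩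
    exact eq_zero_of_rOmega_eq_zero_of_I_smul_eq (h3 u u') hu'
  refine ⟨hdisj, ?_⟩
  let J : HW n ≃ₗ[ℝ] HW n := DistribMulAction.toLinearEquiv ℝ (HW n) (Units.mk0 _ Complex.I_ne_zero)
  have hbound := γ₂.three_mul_finrank_range_le J
    (Submodule.disjoint_def.2 fun x ⟨u, hu⟩ ⟨_, ⟨u', rfl⟩, hu'⟩ ↦ hdisj x ⟨u, hu⟩ ⟨u', hu'⟩)
    (by rintro _ ⟨u, rfl⟩; exact h1 u)
    (by rintro _ ⟨_, ⟨u, rfl⟩, rfl⟩; exact h2 u)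
  rw [finrank_HW] at hbound
  omega

/-- for γ₂ with range γ₂ ⊆ ker γ₂, J(range γ₂) ⊆ ker γ₂ and
ω vanishing on range γ₂, one has range γ₂ ∩ J(range γ₂) = {0} and
3·rank(γ₂) ≤ 2n − 2. -/
theorem rank_gamma2_bound (n : ℕ) (hn : 1 ≤ n)
    (γ₂ : HW n →ₗ[ℝ] HW n)
    (h1 : ∀ u, γ₂ (γ₂ u) = 0)
    (h2 : ∀ u, γ₂ (Complex.I • γ₂ u) = 0)
    (h3 : ∀ u u', rOmega (γ₂ u) (γ₂ u') = 0) :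
    (∀ x : HW n, (∃ u, γ₂ u = x) → (∃ u, Complex.I • γ₂ u = x) → x = 0) ∧
      3 * Module.finrank ℝ (LinearMap.range γ₂) ≤ 2 * n - 2 :=
  rank_gamma2_bound_general n γ₂ h1 h2 h3
end
end

section
/- Let n ≥ 1, let W = ℂ^{n−1} regarded as a real vector space, and let γ₂ : W → W, γ₃ : ℂ → W and b₂ : W → ℝ be ℝ-linear maps satisfying: (C1) range γ₂ ⊆ ker γ₂, J(range γ₂) ⊆ ker γ₂, and ω(x,y) = 0 for all x,y ∈ range γ₂; and (C3) b₂(s·γ₂(u)) = 2ω(γ₂(u), γ₃(s)) and b₂(γ₃(i·s) − J(γ₃(s))) = 2ω(γ₃(i·s), γ₃(s)) for all u ∈ W, s ∈ ℂ. If there exists s ∈ ℂ with s ≠ 0 such that γ₃(i·s) − J(γ₃(s)) ∈ range γ₂ + J(range γ₂), then range γ₃ ⊆ range γ₂, and consequently b₂ vanishes on range γ₂ + J(range γ₂). -/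
/-! Put w₁ = γ₃ 1 and w₂ = γ₃ i, so that γ₃(is) − iγ₃(s) = s̄·(w₂ − i w₁). In (C3b) the left side
is homogeneous of degree 1 in a real s and the right side of degree 2, hence ω(w₂, w₁) = 0 and
b₂(w₂ − i w₁) = 0. Dividing the hypothesis by s̄ puts w₂ − i w₁ = γ₂ a + i γ₂ b in the complex span of
range γ₂. Then v = w₂ − γ₂ a equals i(w₁ + γ₂ b), so |v|² = ω(v, w₁ + γ₂ b), and (C1), (C3a) turn this
into −b₂(w₂ − i w₁)/2 = 0. Thus w₂ = γ₂ a, w₁ = −γ₂ b, and the vanishing of b₂ follows from (C3a)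
and the vanishing of ω on range γ₂. -/

open Matrix

noncomputable section

open Complex

theorem LinearMap.map_eq_re_smul_add_im_smul {M : Type*} [AddCommGroup M] [Module ℝ M]
    (f : ℂ →ₗ[ℝ] M) (s : ℂ) : f s = s.re • f 1 + s.im • f I := by
  have hs : s = s.re • (1 : ℂ) + s.im • I := by simp
  conv_lhs => rw [hs, map_add, map_smul, map_smul]

section ComplexLinear

variable {E : Type*} [AddCommGroup E] [Module ℂ E] [Module ℝ E] [IsScalarTower ℝ ℂ E]

theorem LinearMap.map_I_mul_sub_I_smul (f : ℂ →ₗ[ℝ] E) (s : ℂ) :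
    f (I * s) - I • f s = (starRingEnd ℂ s) • (f I - I • f 1) := by
  rw [f.map_eq_re_smul_add_im_smul (I * s), f.map_eq_re_smul_add_im_smul s]
  conv_rhs => rw [← re_add_im s]
  simp only [mul_re, mul_im, I_re, I_im, map_add, map_mul, conj_ofReal, conj_I]
  linear_combination (norm := module) I_sq • ((-s.im) • f 1)

theorem LinearMap.exists_smul_add_I_smul_eq {M : Type*} [AddCommGroup M] [Module ℝ M]
    (f : M →ₗ[ℝ] E) (c : ℂ) (x y : M) :
    ∃ a b, c • (f x + I • f y) = f a + I • f b := by
  refine ⟨c.re • x - c.im • y, c.im • x + c.re • y, ?_⟩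
  simp only [map_add, map_sub, map_smul]
  linear_combination (norm := module) (re_add_im c).symm • (f x + I • f y) + I_sq • (c.im • f y)

end ComplexLinear

variable {n : ℕ}

theorem rOmega_eq_im (u v : HW n) : rOmega u v = (u ⬝ᵥ star v).im := by
  simp [rOmega, rInner, dotProduct_smul]

theorem rOmega_sub_left (u u' v : HW n) : rOmega (u - u') v = rOmega u v - rOmega u' v := by
  simp only [rOmega_eq_im, sub_dotProduct, sub_im]

theorem rOmega_add_right (u v v' : HW n) : rOmega u (v + v') = rOmega u v + rOmega u v' := by
  simp only [rOmega_eq_im, star_add, dotProduct_add, add_im]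

theorem rOmega_smul_left (r : ℝ) (u v : HW n) : rOmega (r • u) v = r * rOmega u v := by
  simp only [rOmega_eq_im, smul_dotProduct, smul_im, smul_eq_mul]

theorem rOmega_smul_right (r : ℝ) (u v : HW n) : rOmega u (r • v) = r * rOmega u v := by
  simp only [rOmega_eq_im, star_smul, star_trivial, dotProduct_smul, smul_im, smul_eq_mul]

theorem rOmega_swap (u v : HW n) : rOmega v u = -rOmega u v := by
  rw [rOmega_eq_im, rOmega_eq_im, dotProduct_star, star_def, conj_im]

theorem rInner_self_eq_zero {v : HW n} (h : rInner v v = 0) : v = 0 := by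
  have him : (v ⬝ᵥ star v).im = 0 := by
    have := rOmega_swap v v
    rw [rOmega_eq_im] at this
    linarith
  open ComplexOrder in exact dotProduct_self_star_eq_zero.mp (ext h him)

theorem eq_zero_of_eq_I_smul_of_rOmega_eq_zero {v z : HW n} (hv : v = I • z)
    (h : rOmega v z = 0) : v = 0 :=
  rInner_self_eq_zero (by rwa [rOmega, ← hv] at h)

theorem rOmega_map_I_map_one_eq_zero (γ₃ : ℂ →ₗ[ℝ] HW n) (b₂ : HW n →ₗ[ℝ] ℝ)
    (h : ∀ s : ℂ, b₂ (γ₃ (I * s) - I • γ₃ s) = 2 * rOmega (γ₃ (I * s)) (γ₃ s)) :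
    rOmega (γ₃ I) (γ₃ 1) = 0 := by
  have hr : ∀ r : ℝ, r * b₂ (γ₃ I - I • γ₃ 1) = 2 * r ^ 2 * rOmega (γ₃ I) (γ₃ 1) := by
    intro r
    have h_one : (r : ℂ) = r • (1 : ℂ) := by simp
    have h_I : I * r = r • I := by simp [mul_comm]
    have := h r
    rw [h_I, h_one, map_smul, map_smul, smul_comm I r, ← smul_sub, map_smul, rOmega_smul_left,
      rOmega_smul_right, smul_eq_mul] at this
    linarith
  linarith [hr 1, hr 2]

theorem eq_map_and_eq_neg_map_of_sub_I_smul_eq {γ₂ : HW n →ₗ[ℝ] HW n}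
    {b₂ : HW n →ₗ[ℝ] ℝ} {w₁ w₂ a b : HW n}
    (hC1c : ∀ u u', rOmega (γ₂ u) (γ₂ u') = 0)
    (h₁ : ∀ u, b₂ (γ₂ u) = 2 * rOmega (γ₂ u) w₁)
    (hI : ∀ u, b₂ (I • γ₂ u) = 2 * rOmega (γ₂ u) w₂)
    (hω : rOmega w₂ w₁ = 0) (hP : w₂ - I • w₁ = γ₂ a + I • γ₂ b)
    (hb : b₂ (w₂ - I • w₁) = 0) :
    w₂ = γ₂ a ∧ w₁ = -γ₂ b := by
  have hv : w₂ - γ₂ a = I • (w₁ + γ₂ b) := by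
    linear_combination (norm := module) hP
  have hv0 : w₂ - γ₂ a = 0 := by
    refine eq_zero_of_eq_I_smul_of_rOmega_eq_zero hv ?_
    rw [rOmega_sub_left, rOmega_add_right, rOmega_add_right, hω, hC1c, rOmega_swap (γ₂ b)]
    rw [hP, map_add, h₁, hI] at hb
    linarith
  refine ⟨sub_eq_zero.mp hv0, eq_neg_of_add_eq_zero_left ?_⟩
  rw [hv0, eq_comm, smul_eq_zero] at hv
  exact hv.resolve_left I_ne_zero

theorem gamma3_in_gamma2_general (n : ℕ)
    (γ₂ : HW n →ₗ[ℝ] HW n) (γ₃ : ℂ →ₗ[ℝ] HW n) (b₂ : HW n →ₗ[ℝ] ℝ)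
    (hC1c : ∀ u u', rOmega (γ₂ u) (γ₂ u') = 0)
    (hC3a : ∀ (u : HW n) (s : ℂ),
      b₂ (s • γ₂ u) = 2 * rOmega (γ₂ u) (γ₃ s))
    (hC3b : ∀ s : ℂ,
      b₂ (γ₃ (Complex.I * s) - Complex.I • γ₃ s) =
        2 * rOmega (γ₃ (Complex.I * s)) (γ₃ s))
    (hex : ∃ s : ℂ, s ≠ 0 ∧ ∃ x y : HW n,
      γ₃ (Complex.I * s) - Complex.I • γ₃ s = γ₂ x + Complex.I • γ₂ y) :
    (∀ s : ℂ, ∃ u : HW n, γ₃ s = γ₂ u) ∧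
      (∀ x y : HW n, b₂ (γ₂ x + Complex.I • γ₂ y) = 0) := by
  obtain ⟨s, hs, x, y, hxy⟩ := hex
  have h₁ (u : HW n) : b₂ (γ₂ u) = 2 * rOmega (γ₂ u) (γ₃ 1) := by simpa using hC3a u 1
  have hω := rOmega_map_I_map_one_eq_zero γ₃ b₂ hC3b
  have hb : b₂ (γ₃ I - I • γ₃ 1) = 0 := by simpa [hω] using hC3b 1
  obtain ⟨a, b, hP⟩ : ∃ a b, γ₃ I - I • γ₃ 1 = γ₂ a + I • γ₂ b := by
    rw [γ₃.map_I_mul_sub_I_smul] at hxy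
    obtain ⟨a, b, h⟩ := γ₂.exists_smul_add_I_smul_eq (starRingEnd ℂ s)⁻¹ x y
    refine ⟨a, b, ?_⟩
    rw [← h, ← hxy, smul_smul, inv_mul_cancel₀ (by simpa using hs), one_smul]
  obtain ⟨hw₂, hw₁⟩ :=
    eq_map_and_eq_neg_map_of_sub_I_smul_eq hC1c h₁ (hC3a · I) hω hP hb
  refine ⟨fun t => ⟨t.im • a - t.re • b, ?_⟩, fun u v => ?_⟩
  · rw [γ₃.map_eq_re_smul_add_im_smul, hw₁, hw₂, map_sub, map_smul, map_smul]
    module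
  · rw [map_add, h₁, hC3a, hw₁, hw₂, ← map_neg, hC1c, hC1c]
    ring

/-- under (C1) and (C3), if γ₃(is) − Jγ₃(s) ∈ range γ₂ + J range γ₂
for some s ≠ 0, then range γ₃ ⊆ range γ₂, and b₂ vanishes on
range γ₂ + J range γ₂. -/
theorem gamma3_in_gamma2 (n : ℕ) (hn : 1 ≤ n)
    (γ₂ : HW n →ₗ[ℝ] HW n) (γ₃ : ℂ →ₗ[ℝ] HW n) (b₂ : HW n →ₗ[ℝ] ℝ)
    (hC1a : ∀ u, γ₂ (γ₂ u) = 0)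
    (hC1b : ∀ u, γ₂ (Complex.I • γ₂ u) = 0)
    (hC1c : ∀ u u', rOmega (γ₂ u) (γ₂ u') = 0)
    (hC3a : ∀ (u : HW n) (s : ℂ),
      b₂ (s • γ₂ u) = 2 * rOmega (γ₂ u) (γ₃ s))
    (hC3b : ∀ s : ℂ,
      b₂ (γ₃ (Complex.I * s) - Complex.I • γ₃ s) =
        2 * rOmega (γ₃ (Complex.I * s)) (γ₃ s))
    (hex : ∃ s : ℂ, s ≠ 0 ∧ ∃ x y : HW n,
      γ₃ (Complex.I * s) - Complex.I • γ₃ s = γ₂ x + Complex.I • γ₂ y) :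
    (∀ s : ℂ, ∃ u : HW n, γ₃ s = γ₂ u) ∧
      (∀ x y : HW n, b₂ (γ₂ x + Complex.I • γ₂ y) = 0) :=
  gamma3_in_gamma2_general n γ₂ γ₃ b₂ hC1c hC3a hC3b hex
end
end

section
/- Let n ≥ 1 and let A, A' ∈ GL(2n+1,ℤ) be matrices such that each, regarded as a complex matrix, is diagonalizable and possesses an eigenvalue λ (resp. λ') with |λ| ≠ 1 (resp. |λ'| ≠ 1) such that λ and λ⁻¹ (resp. λ' and λ'⁻¹) are eigenvalues of algebraic multiplicity 1 while every other eigenvalue has modulus 1. Then the groups ℤ ⋉_A ℤ^{2n+1} and ℤ ⋉_{A'} ℤ^{2n+1} are isomorphic if and only if there exists P ∈ GL(2n+1,ℤ) with P·A·P⁻¹ = A' or P·A·P⁻¹ = A'⁻¹. -/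
open Matrix

noncomputable section

/-- The additive automorphism of ℤ^m given by an integral matrix with
invertible determinant. -/
def intMatAut {m : ℕ} (A : Matrix (Fin m) (Fin m) ℤ) (h : IsUnit A.det) :
    AddAut (Fin m → ℤ) where
  toFun := A.mulVec
  invFun := (A⁻¹).mulVec
  left_inv x := by
    rw [Matrix.mulVec_mulVec, Matrix.nonsing_inv_mul A h, Matrix.one_mulVec]
  right_inv x := by
    rw [Matrix.mulVec_mulVec, Matrix.mul_nonsing_inv A h, Matrix.one_mulVec]
  map_add' x y := Matrix.mulVec_add A x y

/-- The action of ℤ on ℤ^m where k acts by A^k. -/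
def zphi {m : ℕ} (A : Matrix (Fin m) (Fin m) ℤ) (h : IsUnit A.det) :
    Multiplicative ℤ →* MulAut (Multiplicative (Fin m → ℤ)) :=
  MonoidHom.mk'
    (fun k => (AddEquiv.toMultiplicative (intMatAut A h) :
        MulAut (Multiplicative (Fin m → ℤ))) ^ (Multiplicative.toAdd k))
    (fun k l => by simp [_root_.zpow_add])

/-- The semidirect product ℤ ⋉_A ℤ^m. -/
abbrev ZSemi {m : ℕ} (A : Matrix (Fin m) (Fin m) ℤ) (h : IsUnit A.det) : Type :=
  SemidirectProduct (Multiplicative (Fin m → ℤ)) (Multiplicative ℤ) (zphi A h)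

/-- The eigenvalue hypothesis: A (regarded over ℂ) is diagonalizable, and has
an eigenvalue λ with |λ| ≠ 1 such that λ and λ⁻¹ have algebraic multiplicity 1
while every other eigenvalue has modulus 1. -/
def HypEV {m : ℕ} (A : Matrix (Fin m) (Fin m) ℤ) : Prop :=
  ∃ (P : Matrix (Fin m) (Fin m) ℂ) (d : Fin m → ℂ),
    IsUnit P.det ∧
    A.map (Int.cast : ℤ → ℂ) = P * Matrix.diagonal d * P⁻¹ ∧
    ∃ i j : Fin m, i ≠ j ∧
      ‖d i‖ ≠ 1 ∧ d j = (d i)⁻¹ ∧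
      (∀ k, k ≠ i → d k ≠ d i) ∧
      (∀ k, k ≠ j → d k ≠ d j) ∧
      (∀ k, k ≠ i → k ≠ j → ‖d k‖ = 1)

/-!
Write `G_A = ℤ^m ⋊_A ℤ`. The point is that any isomorphism `G_A ≅ G_{A'}` maps the normal
subgroup `ℤ^m` onto `ℤ^m`. Otherwise the composite `R : G_A → G_{A'} → ℤ` restricts to a
nonzero functional `f` on `ℤ^m`. The kernel of `R` is abelian (it embeds into `ℤ^m ⊆ G_{A'}`)
and contains an element `(w, k)` with `k ≠ 0`, which must then commute with `ker f`; so `A^k`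
fixes `ker f` pointwise. Then
`A^k - 1` has rank at most one, whereas the two eigenvalues `λ^k, λ^{-k} ≠ 1` of `A^k` force
rank at least two. An isomorphism preserving `ℤ^m` amounts to automorphisms `P` of `ℤ^m` and
`±1` of `ℤ` intertwining the two actions, that is, `P A P⁻¹ = A'^{±1}`.
-/

open Multiplicative

namespace SemidirectProduct

theorem inl_left_of_right_eq_one {N G : Type*} [Group N] [Group G] {φ : G →* MulAut N}
    {x : N ⋊[φ] G} (hx : x.right = 1) : inl x.left = x := by
  rw [← inl_left_mul_inr_right x, hx]
  simp

theorem mul_inl_mul_inv {N G : Type*} [CommGroup N] [Group G] {φ : G →* MulAut N}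
    (x : N ⋊[φ] G) (n : N) : x * inl n * x⁻¹ = inl (φ x.right n) := by
  ext <;> simp [mul_left, inv_left, mul_right, inv_right]

theorem exists_congr_of_right_eq_one_iff {N₁ G₁ N₂ G₂ : Type*} [Group N₁] [Group G₁]
    [CommGroup N₂] [Group G₂] {φ₁ : G₁ →* MulAut N₁} {φ₂ : G₂ →* MulAut N₂}
    (Φ : N₁ ⋊[φ₁] G₁ ≃* N₂ ⋊[φ₂] G₂) (hΦ : ∀ x, (Φ x).right = 1 ↔ x.right = 1) :
    ∃ (fn : N₁ ≃* N₂) (fg : G₁ ≃* G₂), ∀ g, (φ₁ g).trans fn = fn.trans (φ₂ (fg g)) := by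
  have hΦinl (n : N₁) : inl (Φ (inl n)).left = Φ (inl n) :=
    inl_left_of_right_eq_one ((hΦ _).2 rfl)
  let fnHom : N₁ →* N₂ :=
    { toFun n := (Φ (inl n)).left
      map_one' := by simp
      map_mul' a b := by simp [mul_left, (hΦ _).2 (right_inl a)] }
  have fn_bij : Function.Bijective fnHom := by
    refine ⟨fun a b hab => inl_injective (Φ.injective ?_), fun n => ⟨(Φ.symm (inl n)).left, ?_⟩⟩
    · rw [← hΦinl a, ← hΦinl b]
      exact congrArg _ hab
    · have h := inl_left_of_right_eq_one ((hΦ (Φ.symm (inl n))).1 (by simp))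
      simp [fnHom, h]
  let fgHom : G₁ →* G₂ := rightHom.comp (Φ.toMonoidHom.comp inr)
  have fg_bij : Function.Bijective fgHom := by
    refine ⟨(injective_iff_map_eq_one _).2 fun g hg => ?_, fun g => ⟨(Φ.symm (inr g)).right, ?_⟩⟩
    · simpa using (hΦ (inr g)).1 hg
    · have h := congrArg (fun x => (Φ x).right) (inl_left_mul_inr_right (Φ.symm (inr g)))
      simp only [map_mul, mul_right, (hΦ _).2 (right_inl _), one_mul, MulEquiv.apply_symm_apply,
        right_inr] at h
      exact h
  refine ⟨MulEquiv.ofBijective fnHom fn_bij, MulEquiv.ofBijective fgHom fg_bij,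
    fun g => MulEquiv.ext fun n => inl_injective (φ := φ₂) ?_⟩
  have h := congrArg Φ (inl_aut (φ := φ₁) g n)
  rw [map_mul, map_mul, map_inv, map_inv, ← hΦinl n, mul_inl_mul_inv] at h
  exact (hΦinl _).trans h

theorem apply_fixed_of_commute_ker {N : Type*} [CommGroup N] {φ : Multiplicative ℤ →* MulAut N}
    (R : N ⋊[φ] Multiplicative ℤ →* Multiplicative ℤ)
    (hR : ∀ x y, R x = 1 → R y = 1 → Commute x y) (u w : N) (hw : R (inl w) = 1) :
    φ (R (inl u)) w = w := by
  set t := R (inl u)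
  set s := R (inr (ofAdd 1))
  have hR_inr (k : Multiplicative ℤ) : R (inr k) = s ^ toAdd k := by
    rw [← map_zpow, ← map_zpow, ← ofAdd_zsmul, smul_eq_mul, mul_one, ofAdd_toAdd]
  -- an element of `ker R` with `ℤ`-component `t`; its commuting with `inl w` is the claim
  have hx : R (inl (u ^ (-toAdd s)) * inr t) = 1 := by
    rw [map_mul, map_zpow, hR_inr]
    apply toAdd.injective
    simp [t, mul_comm]
  have h := congrArg left (hR _ _ hx hw).eq
  simp only [mul_left, left_inl, right_inl, left_inr, right_inr, mul_right, map_one,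
    MulAut.one_apply, mul_one, one_mul] at h
  simpa [mul_comm w] using h

end SemidirectProduct

theorem MulAut.forall_trans_eq_trans_iff_ofAdd_one {N₁ N₂ G : Type*} [Group N₁] [Group N₂]
    [Group G] (φ₁ : Multiplicative ℤ →* MulAut N₁) (φ₂ : G →* MulAut N₂) (fn : N₁ ≃* N₂)
    (fg : Multiplicative ℤ ≃* G) :
    (∀ g, (φ₁ g).trans fn = fn.trans (φ₂ (fg g))) ↔
      (φ₁ (ofAdd 1)).trans fn = fn.trans (φ₂ (fg (ofAdd 1))) := by
  have key (g) : (φ₁ g).trans fn = fn.trans (φ₂ (fg g)) ↔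
      ((MulAut.congr fn).toMonoidHom.comp φ₁) g = (φ₂.comp fg.toMonoidHom) g := by
    constructor <;> intro h <;> ext x
    · simp [MulAut.congr_apply, h]
    · simpa [MulAut.congr_apply] using DFunLike.congr_fun h (fn x)
  simp only [key]
  exact ⟨fun h => h _, fun h => DFunLike.congr_fun (MonoidHom.ext_mint h)⟩

theorem MulEquiv.apply_ofAdd_one_eq_or_eq_neg (fg : Multiplicative ℤ ≃* Multiplicative ℤ) :
    fg (ofAdd 1) = ofAdd 1 ∨ fg (ofAdd 1) = ofAdd (-1) := by
  rcases Int.addEquiv_eq_refl_or_neg fg.toAdditive with h | h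
  · exact .inl (congrArg ofAdd (DFunLike.congr_fun h 1))
  · exact .inr (congrArg ofAdd (DFunLike.congr_fun h 1))

theorem pow_ne_one_of_norm_ne_one {𝕜 : Type*} [NormedDivisionRing 𝕜] {x : 𝕜} (hx : ‖x‖ ≠ 1)
    {p : ℕ} (hp : p ≠ 0) : x ^ p ≠ 1 := fun h =>
  hx ((pow_eq_one_iff_of_nonneg (norm_nonneg x) hp).1 (by rw [← norm_pow, h, norm_one]))

namespace Matrix

theorem smul_eq_vecMulVec_of_mulVec_eq_zero {ι κ : Type*} [Fintype ι] [DecidableEq ι]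
    (M : Matrix κ ι ℤ) (f : (ι → ℤ) →+ ℤ) (u : ι → ℤ) (hM : ∀ w, f w = 0 → M *ᵥ w = 0) :
    f u • M = vecMulVec (M *ᵥ u) (fun s => f (Pi.single s 1)) := by
  ext q s
  have hw : f (f u • Pi.single s 1 - f (Pi.single s 1) • u) = 0 := by
    rw [map_sub, map_zsmul, map_zsmul, smul_eq_mul, smul_eq_mul, mul_comm, sub_self]
  have h := congrFun (hM _ hw) q
  rw [mulVec_sub, mulVec_smul, mulVec_smul, mulVec_single_one, Pi.sub_apply, Pi.zero_apply,
    sub_eq_zero] at h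
  simpa [vecMulVec_apply, mul_comm] using h

theorem rank_map_le_one_of_mulVec_eq_zero {ι K : Type*} [Fintype ι] [DecidableEq ι] [Field K]
    [CharZero K] (M : Matrix ι ι ℤ) (f : (ι → ℤ) →+ ℤ) {u : ι → ℤ} (hu : f u ≠ 0)
    (hM : ∀ w, f w = 0 → M *ᵥ w = 0) : (M.map (Int.cast : ℤ → K)).rank ≤ 1 := by
  have h := smul_eq_vecMulVec_of_mulVec_eq_zero M f u hM
  have hM' : M.map (Int.cast : ℤ → K) =
      vecMulVec ((f u : K)⁻¹ • fun q => ((M *ᵥ u) q : K)) (fun s => (f (Pi.single s 1) : K)) := by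
    ext q s
    have := congrArg (Int.cast : ℤ → K) (congrFun (congrFun h q) s)
    simp only [smul_apply, smul_eq_mul, vecMulVec_apply, Int.cast_mul] at this
    simp only [map_apply, vecMulVec_apply, Pi.smul_apply, smul_eq_mul]
    field_simp
    linear_combination this
  rw [hM']
  exact rank_vecMulVec_le _ _

theorem conj_eq_iff_mulVec {ι R : Type*} [Fintype ι] [DecidableEq ι] [CommRing R]
    {P : Matrix ι ι R} (hP : IsUnit P.det) (A B : Matrix ι ι R) :
    P * A * P⁻¹ = B ↔ ∀ v, P *ᵥ (A *ᵥ v) = B *ᵥ (P *ᵥ v) := by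
  simp only [mulVec_mulVec, ← funext_iff]
  rw [mulVec_injective.eq_iff]
  constructor
  · rintro rfl
    rw [nonsing_inv_mul_cancel_right _ _ hP]
  · intro h
    rw [h, mul_nonsing_inv_cancel_right _ _ hP]

end Matrix

section

variable {m : ℕ}

theorem intMatAut_apply (A : Matrix (Fin m) (Fin m) ℤ) (hA : IsUnit A.det) (v : Fin m → ℤ) :
    intMatAut A hA v = A *ᵥ v :=
  rfl

theorem exists_intMatAut_eq (e : (Fin m → ℤ) ≃+ (Fin m → ℤ)) :
    ∃ (P : Matrix (Fin m) (Fin m) ℤ) (hP : IsUnit P.det), intMatAut P hP = e := by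
  let L : (Fin m → ℤ) ≃ₗ[ℤ] (Fin m → ℤ) := e.toIntLinearEquiv
  have hPQ : LinearMap.toMatrix' L.toLinearMap * LinearMap.toMatrix' L.symm.toLinearMap = 1 := by
    rw [← LinearMap.toMatrix'_comp, L.comp_symm, LinearMap.toMatrix'_id]
  exact ⟨_, isUnit_det_of_right_inverse hPQ,
    AddEquiv.ext (LinearMap.toMatrix'_mulVec (L : (Fin m → ℤ) →ₗ[ℤ] (Fin m → ℤ)))⟩

theorem zphi_ofAdd_one_apply (A : Matrix (Fin m) (Fin m) ℤ) (hA : IsUnit A.det)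
    (v : Fin m → ℤ) : zphi A hA (ofAdd 1) (ofAdd v) = ofAdd (A *ᵥ v) :=
  rfl

theorem zphi_ofAdd_neg_one_apply (A : Matrix (Fin m) (Fin m) ℤ) (hA : IsUnit A.det)
    (v : Fin m → ℤ) : zphi A hA (ofAdd (-1)) (ofAdd v) = ofAdd (A⁻¹ *ᵥ v) :=
  rfl

theorem zphi_ofAdd_natCast_apply (A : Matrix (Fin m) (Fin m) ℤ) (hA : IsUnit A.det) (p : ℕ)
    (v : Fin m → ℤ) : zphi A hA (ofAdd (p : ℤ)) (ofAdd v) = ofAdd ((A ^ p) *ᵥ v) := by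
  induction p generalizing v with
  | zero => simp
  | succ p ih =>
    rw [Nat.cast_succ, ofAdd_add, map_mul, MulAut.mul_apply, zphi_ofAdd_one_apply, ih,
      mulVec_mulVec, pow_succ]

theorem zphi_trans_eq_trans_iff {A B P : Matrix (Fin m) (Fin m) ℤ} (hA : IsUnit A.det)
    (hP : IsUnit P.det) {σ : MulAut (Multiplicative (Fin m → ℤ))}
    (hσ : ∀ w, σ (ofAdd w) = ofAdd (B *ᵥ w)) :
    (zphi A hA (ofAdd 1)).trans (AddEquiv.toMultiplicative (intMatAut P hP)) =
        (AddEquiv.toMultiplicative (intMatAut P hP)).trans σ ↔ P * A * P⁻¹ = B := by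
  rw [conj_eq_iff_mulVec hP, MulEquiv.ext_iff, ofAdd.surjective.forall]
  refine forall_congr' fun v => ?_
  simp [zphi_ofAdd_one_apply, hσ, intMatAut_apply]

theorem exists_conj_iff_exists_congr (A A' : Matrix (Fin m) (Fin m) ℤ) (hA : IsUnit A.det)
    (hA' : IsUnit A'.det) :
    (∃ P : Matrix (Fin m) (Fin m) ℤ, IsUnit P.det ∧ (P * A * P⁻¹ = A' ∨ P * A * P⁻¹ = A'⁻¹)) ↔
      ∃ (fn : Multiplicative (Fin m → ℤ) ≃* Multiplicative (Fin m → ℤ))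
        (fg : Multiplicative ℤ ≃* Multiplicative ℤ),
        ∀ g, (zphi A hA g).trans fn = fn.trans (zphi A' hA' (fg g)) := by
  constructor
  · rintro ⟨P, hP, h | h⟩
    · refine ⟨AddEquiv.toMultiplicative (intMatAut P hP), MulEquiv.refl _, ?_⟩
      rw [MulAut.forall_trans_eq_trans_iff_ofAdd_one]
      exact (zphi_trans_eq_trans_iff hA hP (zphi_ofAdd_one_apply A' hA')).2 h
    · refine ⟨AddEquiv.toMultiplicative (intMatAut P hP), MulEquiv.inv _, ?_⟩
      rw [MulAut.forall_trans_eq_trans_iff_ofAdd_one]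
      exact (zphi_trans_eq_trans_iff hA hP (zphi_ofAdd_neg_one_apply A' hA')).2 h
  · rintro ⟨fn, fg, h⟩
    obtain ⟨P, hP, hfn⟩ := exists_intMatAut_eq (AddEquiv.toMultiplicative.symm fn)
    rw [← AddEquiv.toMultiplicative.apply_symm_apply fn, ← hfn,
      MulAut.forall_trans_eq_trans_iff_ofAdd_one] at h
    rcases fg.apply_ofAdd_one_eq_or_eq_neg with hg | hg <;> rw [hg] at h
    · exact ⟨P, hP, .inl ((zphi_trans_eq_trans_iff hA hP (zphi_ofAdd_one_apply A' hA')).1 h)⟩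
    · exact ⟨P, hP, .inr ((zphi_trans_eq_trans_iff hA hP (zphi_ofAdd_neg_one_apply A' hA')).1 h)⟩

theorem HypEV.two_le_rank_pow_sub_one {A : Matrix (Fin m) (Fin m) ℤ} (hE : HypEV A) {p : ℕ}
    (hp : p ≠ 0) : 2 ≤ ((A ^ p - 1).map (Int.cast : ℤ → ℂ)).rank := by
  classical
  obtain ⟨P, d, hP, hdiag, i, j, hij, hi, hj, -, -, -⟩ := hE
  have hconj : SemiconjBy P (diagonal d) (A.map (Int.cast : ℤ → ℂ)) := by
    rw [SemiconjBy, hdiag, nonsing_inv_mul_cancel_right _ _ hP]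
  have hmap : (A ^ p - 1).map (Int.cast : ℤ → ℂ) = A.map (Int.cast : ℤ → ℂ) ^ p - 1 := by
    rw [Matrix.map_sub _ Int.cast_sub, Matrix.map_one _ Int.cast_zero Int.cast_one]
    exact congrArg (· - 1) (Matrix.map_pow A (Int.castRingHom ℂ) p)
  have hconj' : SemiconjBy P (diagonal (fun t => d t ^ p - 1)) ((A ^ p - 1).map Int.cast) := by
    have hdiag_sub : diagonal (fun t => d t ^ p - 1) = diagonal d ^ p - 1 := by
      rw [diagonal_pow, ← diagonal_one, diagonal_sub]
      rfl
    rw [hmap, hdiag_sub]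
    exact (hconj.pow_right p).sub_right (SemiconjBy.one_right P)
  have hdj : ‖d j‖ ≠ 1 := by rwa [hj, norm_inv, Ne, inv_eq_one]
  calc 2 ≤ Fintype.card {t // d t ^ p - 1 ≠ 0} :=
        Fintype.one_lt_card_iff.2 ⟨⟨i, sub_ne_zero.2 (pow_ne_one_of_norm_ne_one hi hp)⟩,
          ⟨j, sub_ne_zero.2 (pow_ne_one_of_norm_ne_one hdj hp)⟩, by simp [hij]⟩
    _ = ((A ^ p - 1).map (Int.cast : ℤ → ℂ)).rank := by
      rw [← rank_diagonal, ← rank_mul_eq_right_of_isUnit_det P _ hP, hconj'.eq,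
        rank_mul_eq_left_of_isUnit_det P _ hP]

theorem HypEV.eq_zero_of_zphi_fixes {A : Matrix (Fin m) (Fin m) ℤ} (hA : IsUnit A.det)
    (hE : HypEV A) {k : ℤ} (hk : k ≠ 0) (f : (Fin m → ℤ) →+ ℤ)
    (hfix : ∀ w, f w = 0 → zphi A hA (ofAdd k) (ofAdd w) = ofAdd w) : f = 0 := by
  by_contra hf
  obtain ⟨u, hu⟩ := DFunLike.ne_iff.1 hf
  have hfix_natAbs (w) (hw : f w = 0) : (A ^ k.natAbs) *ᵥ w = w := by
    apply ofAdd.injective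
    rw [← zphi_ofAdd_natCast_apply A hA]
    rcases Int.natAbs_eq k with h | h
    · rw [← h, hfix w hw]
    · rw [← neg_eq_iff_eq_neg.2 h, ofAdd_neg, map_inv, MulAut.inv_apply, MulEquiv.symm_apply_eq,
        hfix w hw]
  have hrank := rank_map_le_one_of_mulVec_eq_zero (K := ℂ) (A ^ k.natAbs - 1) f hu
    fun w hw => by rw [sub_mulVec, hfix_natAbs w hw, one_mulVec, sub_self]
  have := hE.two_le_rank_pow_sub_one (Int.natAbs_ne_zero.2 hk)
  omega

theorem HypEV.right_map_inl_eq_one {A : Matrix (Fin m) (Fin m) ℤ} {hA : IsUnit A.det}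
    (hE : HypEV A) {N : Type*} [CommGroup N] {ψ : Multiplicative ℤ →* MulAut N}
    (Φ : ZSemi A hA ≃* N ⋊[ψ] Multiplicative ℤ) (v : Multiplicative (Fin m → ℤ)) :
    (Φ (SemidirectProduct.inl v)).right = 1 := by
  let R : ZSemi A hA →* Multiplicative ℤ := SemidirectProduct.rightHom.comp Φ.toMonoidHom
  have hR (x y : ZSemi A hA) (hx : (Φ x).right = 1) (hy : (Φ y).right = 1) : Commute x y := by
    refine Φ.injective ?_
    rw [map_mul, map_mul, ← SemidirectProduct.inl_left_of_right_eq_one hx,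
      ← SemidirectProduct.inl_left_of_right_eq_one hy, ← map_mul, ← map_mul, mul_comm]
  let f : (Fin m → ℤ) →+ ℤ := (R.comp SemidirectProduct.inl).toAdditive
  suffices f = 0 from congrArg ofAdd (DFunLike.congr_fun this (toAdd v))
  by_contra hf
  obtain ⟨u, hu⟩ := DFunLike.ne_iff.1 hf
  exact hf (hE.eq_zero_of_zphi_fixes hA hu f fun w hw =>
    SemidirectProduct.apply_fixed_of_commute_ker R hR (ofAdd u) (ofAdd w) (congrArg ofAdd hw))

theorem HypEV.right_apply_eq_one_iff {A A' : Matrix (Fin m) (Fin m) ℤ} {hA : IsUnit A.det}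
    {hA' : IsUnit A'.det} (hEA : HypEV A) (hEA' : HypEV A') (Φ : ZSemi A hA ≃* ZSemi A' hA')
    (x : ZSemi A hA) : (Φ x).right = 1 ↔ x.right = 1 := by
  constructor
  · intro hx
    rw [← Φ.symm_apply_apply x, ← SemidirectProduct.inl_left_of_right_eq_one hx]
    exact hEA'.right_map_inl_eq_one Φ.symm _
  · intro hx
    rw [← SemidirectProduct.inl_left_of_right_eq_one hx]
    exact hEA.right_map_inl_eq_one Φ _

end

theorem semidirect_iso_iff_conjugate_general (n : ℕ)
    (A A' : Matrix (Fin (2 * n + 1)) (Fin (2 * n + 1)) ℤ)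
    (hA : IsUnit A.det) (hA' : IsUnit A'.det)
    (hEA : HypEV A) (hEA' : HypEV A') :
    Nonempty (ZSemi A hA ≃* ZSemi A' hA') ↔
      ∃ P : Matrix (Fin (2 * n + 1)) (Fin (2 * n + 1)) ℤ,
        IsUnit P.det ∧ (P * A * P⁻¹ = A' ∨ P * A * P⁻¹ = A'⁻¹) := by
  rw [exists_conj_iff_exists_congr A A' hA hA']
  constructor
  · rintro ⟨Φ⟩
    exact SemidirectProduct.exists_congr_of_right_eq_one_iff Φ
      (HypEV.right_apply_eq_one_iff hEA hEA' Φ)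
  · rintro ⟨fn, fg, h⟩
    exact ⟨SemidirectProduct.congr fn fg h⟩

/-- ℤ ⋉_A ℤ^{2n+1} ≅ ℤ ⋉_{A'} ℤ^{2n+1} iff A is GL(2n+1,ℤ)-conjugate
to A' or to A'⁻¹. -/
theorem semidirect_iso_iff_conjugate (n : ℕ) (hn : 1 ≤ n)
    (A A' : Matrix (Fin (2 * n + 1)) (Fin (2 * n + 1)) ℤ)
    (hA : IsUnit A.det) (hA' : IsUnit A'.det)
    (hEA : HypEV A) (hEA' : HypEV A') :
    Nonempty (ZSemi A hA ≃* ZSemi A' hA') ↔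
      ∃ P : Matrix (Fin (2 * n + 1)) (Fin (2 * n + 1)) ℤ,
        IsUnit P.det ∧ (P * A * P⁻¹ = A' ∨ P * A * P⁻¹ = A'⁻¹) :=
  semidirect_iso_iff_conjugate_general n A A' hA hA' hEA hEA'
end
end

section
/- For all ε, ε' ∈ ℚ, the rational Lie algebras g⁰_ℚ(0,ε,1) and g⁰_ℚ(0,ε',1) are isomorphic if and only if there exists α ∈ ℚ with α ≠ 0 such that ε' = α²·ε. -/
/-!
Coordinates are indexed from `0`: `Pi.single i 1` is the paper's `x_{i+1}`.

Rescaling `x₂, x₄, x₆, x₇` by `α⁻¹` turns `g⁰(a, b, c)` into `g⁰(αa, α²b, c)`. Conversely, an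
isomorphism `e` preserves the derived algebra `D = ⟨x₄, …, x₈⟩` and the ideal `U = ⟨x₂, …, x₈⟩`:
`U` is the set of `v` for which `ad v` maps `D` into a line of the centre `⟨x₇, x₈⟩`. So `e`
induces a block-triangular automorphism of `g / D` with diagonal entries `a` (on `x₁`) and a
`2 × 2` block of determinant `δ` (on `x₂, x₃`). Computing the images of `x₇` and `x₈` in two ways,
through `x₇ = [x₁, x₄] = [x₃, x₆]` and `x₈ = [x₁, x₅]`, `εx₈ = [x₂, x₆]`, gives `ε'δ² = εa⁴`,
that is `ε' = (a² / δ)² ε`.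
-/

noncomputable section

/-- The bilinear bracket on K^8 determined by structure constants `c i j`
(given for i < j and extended antisymmetrically). -/
def liebr {K : Type*} [Field K] (c : Fin 8 → Fin 8 → Fin 8 → K)
    (x y : Fin 8 → K) : Fin 8 → K :=
  ∑ i : Fin 8, ∑ j : Fin 8,
    (x i * y j) • (if i < j then c i j else if j < i then -(c j i) else 0)

/-- Isomorphism of the bracket structures. -/
def LieIso {K : Type*} [Field K] (c c' : Fin 8 → Fin 8 → Fin 8 → K) : Prop :=
  ∃ e : (Fin 8 → K) ≃ₗ[K] (Fin 8 → K),
    ∀ x y, e (liebr c x y) = liebr c' (e x) (e y)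

/-- Structure constants of g⁰_K(a,b,c). -/
def g0c {K : Type*} [Field K] (a b c : K) : Fin 8 → Fin 8 → Fin 8 → K :=
  fun i j =>
    if i = 0 ∧ j = 1 then Pi.single 3 1
    else if i = 0 ∧ j = 2 then Pi.single 4 1
    else if i = 1 ∧ j = 2 then Pi.single 5 1
    else if i = 0 ∧ j = 3 then Pi.single 6 1
    else if i = 0 ∧ j = 4 then Pi.single 7 1
    else if i = 1 ∧ j = 5 then (fun k => if k = 6 then a else if k = 7 then b else 0)
    else if i = 2 ∧ j = 5 then (fun k => if k = 6 then c else if k = 7 then -a else 0)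
    else 0

variable {K : Type*} [Field K]

theorem liebr_single_single (c : Fin 8 → Fin 8 → Fin 8 → K) {p q : Fin 8} (h : p < q) :
    liebr c (Pi.single p 1) (Pi.single q 1) = c p q := by
  rw [liebr, Finset.sum_eq_single p, Finset.sum_eq_single q] <;> simp_all [Pi.single_apply]

theorem liebr_g0c (a b c : K) (x y : Fin 8 → K) :
    liebr (g0c a b c) x y =
      ![0, 0, 0, x 0 * y 1 - x 1 * y 0, x 0 * y 2 - x 2 * y 0, x 1 * y 2 - x 2 * y 1,
        x 0 * y 3 - x 3 * y 0 + a * (x 1 * y 5 - x 5 * y 1) + c * (x 2 * y 5 - x 5 * y 2),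
        x 0 * y 4 - x 4 * y 0 + b * (x 1 * y 5 - x 5 * y 1) - a * (x 2 * y 5 - x 5 * y 2)] := by
  ext k
  fin_cases k <;> simp [liebr, g0c, Fin.sum_univ_eight, Finset.sum_apply] <;> ring

theorem lieIso_g0c_smul (a b c : K) {α : K} (hα : α ≠ 0) :
    LieIso (g0c a b c) (g0c (α * a) (α ^ 2 * b) c) := by
  let μ : Fin 8 → K := ![1, α⁻¹, 1, α⁻¹, 1, α⁻¹, α⁻¹, 1]
  have hμ : ∀ i, μ i ≠ 0 := by
    intro i; fin_cases i <;> simp [μ, hα]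
  refine ⟨LinearEquiv.piCongrRight fun i => LinearEquiv.smulOfNeZero K K (μ i) (hμ i), ?_⟩
  intro x y
  ext k
  fin_cases k <;> simp [μ, liebr_g0c] <;> field_simp

theorem symm_liebr {c c' : Fin 8 → Fin 8 → Fin 8 → K} {e : (Fin 8 → K) ≃ₗ[K] (Fin 8 → K)}
    (he : ∀ x y, e (liebr c x y) = liebr c' (e x) (e y)) (x y : Fin 8 → K) :
    e.symm (liebr c' x y) = liebr c (e.symm x) (e.symm y) := by
  rw [LinearEquiv.symm_apply_eq, he, e.apply_symm_apply, e.apply_symm_apply]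

theorem exists_liebr_g0c_eq_single (a b c : K) {j : Fin 8} (hj : 3 ≤ j) :
    ∃ x y, liebr (g0c a b c) x y = Pi.single j 1 := by
  have key : ∀ p q : Fin 8, p < q → g0c a b c p q = Pi.single j 1 →
      ∃ x y, liebr (g0c a b c) x y = Pi.single j 1 :=
    fun p q hpq h => ⟨_, _, (liebr_single_single _ hpq).trans h⟩
  fin_cases j <;> simp at hj
  · exact key 0 1 (by decide) (by simp [g0c])
  · exact key 0 2 (by decide) (by simp [g0c])
  · exact key 1 2 (by decide) (by simp [g0c])
  · exact key 0 3 (by decide) (by simp [g0c])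
  · exact key 0 4 (by decide) (by simp [g0c])

def centreMinor (p q : Fin 8 → K) : K := p 6 * q 7 - p 7 * q 6

theorem centreMinor_map (f : (Fin 8 → K) →ₗ[K] (Fin 8 → K)) {p q : Fin 8 → K}
    (hp : ∀ i < 6, p i = 0) (hq : ∀ i < 6, q i = 0) :
    centreMinor (f p) (f q) =
      centreMinor (f (Pi.single 6 1)) (f (Pi.single 7 1)) * centreMinor p q := by
  have decomp : ∀ r : Fin 8 → K, (∀ i < 6, r i = 0) →
      r = r 6 • Pi.single 6 1 + r 7 • Pi.single 7 1 := by
    intro r hr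
    ext k
    fin_cases k <;> simp [hr]
  rw [decomp p hp, decomp q hq]
  simp [centreMinor]
  ring

theorem liebr_g0c_apply_of_lt_six (a b c : K) (v : Fin 8 → K) {d : Fin 8 → K}
    (hd : ∀ i < 3, d i = 0) : ∀ i < 6, liebr (g0c a b c) v d i = 0 := by
  intro i hi
  fin_cases i <;> simp [liebr_g0c, hd] at hi ⊢

theorem centreMinor_liebr_g0c (a b c : K) {v d d' : Fin 8 → K} (hv : v 0 = 0)
    (hd : ∀ i < 3, d i = 0) (hd' : ∀ i < 3, d' i = 0) :
    centreMinor (liebr (g0c a b c) v d) (liebr (g0c a b c) v d') = 0 := by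
  simp [centreMinor, liebr_g0c, hv, hd, hd']
  ring

theorem centreMinor_liebr_g0c_single (a b c : K) (u : Fin 8 → K) :
    centreMinor (liebr (g0c a b c) u (Pi.single 3 1)) (liebr (g0c a b c) u (Pi.single 4 1)) =
      u 0 ^ 2 := by
  simp [centreMinor, liebr_g0c]
  ring

theorem exists_sq_mul_of_relations {ε ε' a p q r s : K} (ha : a ≠ 0)
    (hδ : p * s - r * q ≠ 0)
    (h1 : a ^ 2 * p = s * (p * s - r * q)) (h2 : a ^ 2 * q = ε' * r * (p * s - r * q))
    (h3 : ε * a ^ 2 * r = q * (p * s - r * q)) (h4 : ε * a ^ 2 * s = ε' * p * (p * s - r * q)) :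
    ∃ α : K, α ≠ 0 ∧ ε' = α ^ 2 * ε := by
  refine ⟨a ^ 2 / (p * s - r * q), by positivity, ?_⟩
  have key : ε' * (p * s - r * q) ^ 2 = ε * a ^ 4 := by
    apply mul_right_cancel₀ hδ
    have h14 : a ^ 2 * p * (ε * a ^ 2 * s) = s * (p * s - r * q) * (ε' * p * (p * s - r * q)) := by
      rw [h1, h4]
    have h23 : a ^ 2 * q * (ε * a ^ 2 * r) = ε' * r * (p * s - r * q) * (q * (p * s - r * q)) := by
      rw [h2, h3]
    linear_combination h23 - h14
  field_simp
  linear_combination key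

section Iso

variable {a b c a' b' c' ε ε' : K} {e : (Fin 8 → K) ≃ₗ[K] (Fin 8 → K)}

theorem map_single_apply_eq_zero
    (he : ∀ x y, e (liebr (g0c a b c) x y) = liebr (g0c a' b' c') (e x) (e y))
    {i j : Fin 8} (hi : i < 3) (hj : 3 ≤ j) : e (Pi.single j 1) i = 0 := by
  obtain ⟨x, y, hxy⟩ := exists_liebr_g0c_eq_single a b c hj
  rw [← hxy, he, liebr_g0c]
  fin_cases i <;> simp at hi ⊢

theorem map_apply_zero_eq_zero
    (he : ∀ x y, e (liebr (g0c a b c) x y) = liebr (g0c a' b' c') (e x) (e y))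
    {v : Fin 8 → K} (hv : v 0 = 0) : e v 0 = 0 := by
  have hD : ∀ j : Fin 8, 3 ≤ j → ∀ i < 3, e.symm (Pi.single j 1) i = 0 :=
    fun j hj i hi => map_single_apply_eq_zero (symm_liebr he) hi hj
  set d := e.symm (Pi.single 3 1)
  set d' := e.symm (Pi.single 4 1)
  refine pow_eq_zero_iff two_ne_zero |>.mp ?_
  calc e v 0 ^ 2
      = centreMinor (e (liebr (g0c a b c) v d)) (e (liebr (g0c a b c) v d')) := by
        rw [he, he, e.apply_symm_apply, e.apply_symm_apply, centreMinor_liebr_g0c_single]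
    _ = 0 := by
        have hmap := centreMinor_map e.toLinearMap
          (liebr_g0c_apply_of_lt_six a b c v (hD 3 le_rfl))
          (liebr_g0c_apply_of_lt_six a b c v (hD 4 (by decide)))
        rw [LinearEquiv.coe_coe] at hmap
        rw [hmap, centreMinor_liebr_g0c a b c hv (hD 3 le_rfl) (hD 4 (by decide)), mul_zero]

def derivedQuotientMatrix (e : (Fin 8 → K) ≃ₗ[K] (Fin 8 → K)) : Matrix (Fin 3) (Fin 3) K :=
  Matrix.of fun i j => e (Pi.single (Fin.castLE (by norm_num) j) 1) (Fin.castLE (by norm_num) i)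

theorem det_derivedQuotientMatrix_ne_zero
    (he : ∀ x y, e (liebr (g0c a b c) x y) = liebr (g0c a' b' c') (e x) (e y)) :
    (derivedQuotientMatrix e).det ≠ 0 := by
  intro hdet
  obtain ⟨w, hw0, hw⟩ := Matrix.exists_vecMul_eq_zero_iff.mpr hdet
  let φ : (Fin 8 → K) →ₗ[K] K := ∑ i : Fin 3, w i • LinearMap.proj (Fin.castLE (by norm_num) i)
  have hφ : ∀ j, φ (e (Pi.single j 1)) = 0 := by
    intro j
    by_cases hj : j < 3
    · simpa [φ, Matrix.vecMul, dotProduct, derivedQuotientMatrix, mul_comm]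
        using congrFun hw ⟨j, hj⟩
    · simp only [φ, LinearMap.sum_apply, LinearMap.smul_apply, LinearMap.proj_apply]
      refine Finset.sum_eq_zero fun i _ => ?_
      rw [map_single_apply_eq_zero he (show Fin.castLE _ i < 3 from i.isLt) (not_lt.mp hj),
        smul_zero]
  have hφe : ∀ x, φ (e x) = 0 := fun x => by
    rw [pi_eq_sum_univ' x]
    simp [hφ]
  apply hw0
  ext i
  simpa [φ, Pi.single_apply, Fin.castLE_inj] using
    hφe (e.symm (Pi.single (Fin.castLE (by norm_num) i) 1))

theorem det_derivedQuotientMatrix (hv1 : e (Pi.single 1 1) 0 = 0) (hv2 : e (Pi.single 2 1) 0 = 0) :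
    (derivedQuotientMatrix e).det = e (Pi.single 0 1) 0 *
      (e (Pi.single 1 1) 1 * e (Pi.single 2 1) 2 - e (Pi.single 2 1) 1 * e (Pi.single 1 1) 2) := by
  simp [Matrix.det_fin_three, derivedQuotientMatrix, hv1, hv2]
  ring

theorem map_single_apply_five_eq_zero
    (he : ∀ x y, e (liebr (g0c 0 ε 1) x y) = liebr (g0c 0 ε' 1) (e x) (e y))
    (hδ : e (Pi.single 1 1) 1 * e (Pi.single 2 1) 2 - e (Pi.single 2 1) 1 * e (Pi.single 1 1) 2 ≠ 0)
    {j : Fin 8} (hj : 3 ≤ j) (h1 : liebr (g0c 0 ε 1) (Pi.single 1 1) (Pi.single j 1) = 0)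
    (h2 : liebr (g0c 0 ε 1) (Pi.single 2 1) (Pi.single j 1) = 0) : e (Pi.single j 1) 5 = 0 := by
  have key : ∀ i : Fin 8, i ≠ 0 → liebr (g0c 0 ε 1) (Pi.single i 1) (Pi.single j 1) = 0 →
      e (Pi.single i 1) 2 = 0 ∨ e (Pi.single j 1) 5 = 0 := by
    intro i hi h
    have h6 := congrFun (he (Pi.single i 1) (Pi.single j 1)) 6
    rw [h, map_zero, liebr_g0c, map_apply_zero_eq_zero he (by simp [hi]),
      map_single_apply_eq_zero he (i := 0) (by decide) hj,
      map_single_apply_eq_zero he (i := 2) (by decide) hj] at h6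
    simpa using h6
  by_contra h5
  apply hδ
  rw [(key 1 (by decide) h1).resolve_right h5, (key 2 (by decide) h2).resolve_right h5]
  ring

theorem exists_sq_mul_of_map_liebr
    (he : ∀ x y, e (liebr (g0c 0 ε 1) x y) = liebr (g0c 0 ε' 1) (e x) (e y)) :
    ∃ α : K, α ≠ 0 ∧ ε' = α ^ 2 * ε := by
  set E : Fin 8 → Fin 8 → K := fun j => e (Pi.single j 1)
  have hbr : ∀ p q : Fin 8, p < q → e (g0c 0 ε 1 p q) = liebr (g0c 0 ε' 1) (E p) (E q) :=
    fun p q hpq => by rw [← liebr_single_single (g0c 0 ε 1) hpq, he]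
  have hD : ∀ j, 3 ≤ j → ∀ i < 3, E j i = 0 := fun j hj i hi => map_single_apply_eq_zero he hi hj
  have h10 : E 1 0 = 0 := map_apply_zero_eq_zero he (by simp)
  have h20 : E 2 0 = 0 := map_apply_zero_eq_zero he (by simp)
  obtain ⟨ha, hδ⟩ := mul_ne_zero_iff.mp
    (det_derivedQuotientMatrix h10 h20 ▸ det_derivedQuotientMatrix_ne_zero he)
  have h35 : E 3 5 = 0 := map_single_apply_five_eq_zero he hδ (by decide)
    (liebr_single_single _ (by decide)) (liebr_single_single _ (by decide))
  have h45 : E 4 5 = 0 := map_single_apply_five_eq_zero he hδ (by decide)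
    (liebr_single_single _ (by decide)) (liebr_single_single _ (by decide))
  have r3 : E 3 = liebr (g0c 0 ε' 1) (E 0) (E 1) := hbr 0 1 (by decide)
  have r4 : E 4 = liebr (g0c 0 ε' 1) (E 0) (E 2) := hbr 0 2 (by decide)
  have r5 : E 5 = liebr (g0c 0 ε' 1) (E 1) (E 2) := hbr 1 2 (by decide)
  have r6 : E 6 = liebr (g0c 0 ε' 1) (E 0) (E 3) := hbr 0 3 (by decide)
  have r7 : E 7 = liebr (g0c 0 ε' 1) (E 0) (E 4) := hbr 0 4 (by decide)
  have r6' : E 6 = liebr (g0c 0 ε' 1) (E 2) (E 5) := by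
    have h25 : g0c 0 ε 1 2 5 = Pi.single 6 1 := by ext k; fin_cases k <;> simp [g0c]
    rw [← hbr 2 5 (by decide), h25]
  have r7' : ε • E 7 = liebr (g0c 0 ε' 1) (E 1) (E 5) := by
    have h15 : g0c 0 ε 1 1 5 = ε • Pi.single 7 1 := by ext k; fin_cases k <;> simp [g0c]
    rw [← hbr 1 5 (by decide), h15, map_smul]
  have c33 : E 3 3 = E 0 0 * E 1 1 := by rw [r3, liebr_g0c]; simp [h10]
  have c34 : E 3 4 = E 0 0 * E 1 2 := by rw [r3, liebr_g0c]; simp [h10]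
  have c43 : E 4 3 = E 0 0 * E 2 1 := by rw [r4, liebr_g0c]; simp [h20]
  have c44 : E 4 4 = E 0 0 * E 2 2 := by rw [r4, liebr_g0c]; simp [h20]
  have c55 : E 5 5 = E 1 1 * E 2 2 - E 2 1 * E 1 2 := by rw [r5, liebr_g0c]; simp; ring
  apply exists_sq_mul_of_relations ha hδ
  · have h := congrFun (r6.symm.trans r6') 6
    simp [liebr_g0c, hD, h20, h35, c33, c55] at h
    linear_combination h
  · have h := congrFun (r6.symm.trans r6') 7
    simp [liebr_g0c, hD, h20, h35, c34, c55] at h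
    linear_combination h
  · have h := congrFun (congrArg (ε • ·) r7 |>.symm.trans r7') 6
    simp [liebr_g0c, hD, h10, h45, c43, c55] at h
    linear_combination h
  · have h := congrFun (congrArg (ε • ·) r7 |>.symm.trans r7') 7
    simp [liebr_g0c, hD, h10, h45, c44, c55] at h
    linear_combination h

end Iso

/-- g⁰_ℚ(0,ε,1) ≅ g⁰_ℚ(0,ε',1) iff ε' = α²ε for some nonzero
rational α. -/
theorem g0_rational_iso_iff (ε ε' : ℚ) :
    LieIso (g0c (0 : ℚ) ε 1) (g0c (0 : ℚ) ε' 1) ↔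
      ∃ α : ℚ, α ≠ 0 ∧ ε' = α ^ 2 * ε := by
  constructor
  · rintro ⟨e, he⟩
    exact exists_sq_mul_of_map_liebr he
  · rintro ⟨α, hα, rfl⟩
    have h := lieIso_g0c_smul (0 : ℚ) ε 1 hα
    rwa [mul_zero] at h
end
end
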